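/- arXiv:2502.13752 — 5 statements merged into one kernel-verified Lean document; each statement's English description precedes it below -/
import Mathlib

section
/- For vectors u¹,…,uⁿ ∈ ℝ², the maximum over all sign choices ε₁,…,εₙ ∈ {−1,1} of the Euclidean norm ‖Σᵢ εᵢuⁱ‖ is at least (1/(n·sin(π/(2n))))·Σᵢ ‖uⁱ‖. -/
open Real Metric Set Pointwise

open scoped Classical

noncomputable section

abbrev E2 : Type := EuclideanSpace ℝ (Fin 2)

/-- The circumradius of a set: the smallest radius of a closed ball containing it. -/
def circumradius (K : Set E2) : ℝ := sInf {ρ : ℝ | 0 ≤ ρ ∧ ∃ t : E2, K ⊆ closedBall t ρ}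

/-- Length of the closed polygonal cycle through the entries of `l` in order. -/
def cycLen (l : List E2) : ℝ := ((l.zip (l.rotate 1)).map fun p => dist p.1 p.2).sum

/-- Shortest closed tour through all of `S`. For points in convex position this is
the perimeter of their convex hull. -/
def polyPerim (S : Finset E2) : ℝ :=
  sInf {x : ℝ | ∃ l : List E2, l.Nodup ∧ l.toFinset = S ∧ x = cycLen l}

def InConvexPosition (S : Finset E2) : Prop :=
  ∀ p ∈ S, p ∉ convexHull ℝ ((S.erase p : Finset E2) : Set E2)

/-- Perimeter of a planar convex body: supremum of perimeters of inscribed polygons. -/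
def perim (K : Set E2) : ℝ :=
  sSup {x : ℝ | ∃ S : Finset E2, ↑S ⊆ K ∧ InConvexPosition S ∧ x = polyPerim S}

/-- The vertex set of a regular `m`-gon with center `c`, radius `ρ`, rotation `φ`. -/
def regularVertexSet (m : ℕ) (c : E2) (ρ φ : ℝ) : Set E2 :=
  Set.range fun k : Fin m =>
    c + ρ • (WithLp.equiv 2 (Fin 2 → ℝ)).symm
      ![Real.cos (2 * π * k / m + φ), Real.sin (2 * π * k / m + φ)]

namespace Stmt3Aux


def dotc (z w : ℂ) : ℝ := z.re * w.re + z.im * w.im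

lemma dotc_le_abs (z w : ℂ) : dotc z w ≤ ‖z‖ * ‖w‖ := by
  have h := Complex.re_le_norm (z * (starRingEnd ℂ) w)
  rw [norm_mul, Complex.norm_conj] at h
  simpa [dotc, Complex.mul_re] using h

lemma exp_I_eq (a : ℝ) :
    Complex.exp (a * Complex.I) = (Real.cos a : ℂ) + (Real.sin a : ℂ) * Complex.I := by
  rw [Complex.exp_mul_I, Complex.ofReal_cos, Complex.ofReal_sin]

lemma dotc_exp (c t : ℝ) :
    dotc ((c : ℂ) * Complex.exp (t * Complex.I)) (Complex.exp (t * Complex.I)) = c := by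
  rw [exp_I_eq]
  simp only [dotc, Complex.add_re, Complex.add_im, Complex.mul_re, Complex.mul_im,
    Complex.ofReal_re, Complex.ofReal_im, Complex.I_re, Complex.I_im]
  linear_combination c * (Real.sin_sq_add_cos_sq t)

lemma abel (F G : ℕ → ℂ) : ∀ n : ℕ,
    ∑ k ∈ Finset.range n, dotc (F (k+1) - F k) (G k)
      = (∑ k ∈ Finset.range n, dotc (F (k+1)) (G k - G (k+1)))
        + dotc (F n) (G n) - dotc (F 0) (G 0)
  | 0 => by simp
  | (n+1) => by
      rw [Finset.sum_range_succ, abel F G n, Finset.sum_range_succ]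
      simp only [dotc, Complex.sub_re, Complex.sub_im]
      ring

lemma chord {a b : ℝ} (hab : a ≤ b) (h2 : b - a ≤ 2 * π) :
    ‖Complex.exp (a * Complex.I) - Complex.exp (b * Complex.I)‖
      = 2 * Real.sin ((b - a) / 2) := by
  have hcos : Real.cos (b - a) = 1 - 2 * Real.sin ((b - a) / 2) ^ 2 := by
    have h := Real.cos_two_mul ((b - a) / 2)
    rw [show 2 * ((b - a) / 2) = b - a by ring] at h
    nlinarith [Real.sin_sq_add_cos_sq ((b - a) / 2)]
  have hkey : (Real.cos a - Real.cos b) ^ 2 + (Real.sin a - Real.sin b) ^ 2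
      = (2 * Real.sin ((b - a) / 2)) ^ 2 := by
    have hc : Real.cos (b - a) = Real.cos b * Real.cos a + Real.sin b * Real.sin a :=
      Real.cos_sub b a
    nlinarith [Real.sin_sq_add_cos_sq a, Real.sin_sq_add_cos_sq b]
  have hsin : 0 ≤ Real.sin ((b - a) / 2) := by
    apply Real.sin_nonneg_of_nonneg_of_le_pi <;> linarith
  rw [exp_I_eq, exp_I_eq]
  have : (Real.cos a : ℂ) + (Real.sin a : ℂ) * Complex.I
      - ((Real.cos b : ℂ) + (Real.sin b : ℂ) * Complex.I)
      = ((Real.cos a - Real.cos b : ℝ) : ℂ) + ((Real.sin a - Real.sin b : ℝ) : ℂ) * Complex.I := by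
    push_cast; ring
  rw [this, Complex.norm_add_mul_I, hkey]
  rw [Real.sqrt_sq (by linarith)]


theorem keyC (n : ℕ) (hn : 1 ≤ n) (z : Fin n → ℂ) :
    ∃ ε : Fin n → ℝ, (∀ i, ε i = 1 ∨ ε i = -1) ∧
      (1 / (n * Real.sin (π / (2 * n)))) * ∑ i, ‖z i‖
        ≤ ‖∑ i, ε i • z i‖ := by
  classical
  have hn0 : (0:ℝ) < n := by exact_mod_cast hn
  have hnn : 0 < n := hn
  -- flip each vector into the closed upper half plane with arg in [0, π)
  set σ : Fin n → ℝ :=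
    fun i => if 0 < (z i).im ∨ ((z i).im = 0 ∧ 0 ≤ (z i).re) then 1 else -1 with hσdef
  have hσ : ∀ i, σ i = 1 ∨ σ i = -1 := by
    intro i
    by_cases h : 0 < (z i).im ∨ ((z i).im = 0 ∧ 0 ≤ (z i).re)
    · left; simp [hσdef, h]
    · right; simp [hσdef, h]
  set w : Fin n → ℂ := fun i => σ i • z i with hwdef
  have habsw : ∀ i, ‖w i‖ = ‖z i‖ := by
    intro i
    rcases hσ i with h | h <;> simp [hwdef, h]
  have hargw : ∀ i, 0 ≤ (w i).arg ∧ (w i).arg < π := by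
    intro i
    have him : 0 ≤ (w i).im ∧ ((w i).im = 0 → 0 ≤ (w i).re) := by
      by_cases h : 0 < (z i).im ∨ ((z i).im = 0 ∧ 0 ≤ (z i).re)
      · have hw : w i = z i := by simp [hwdef, hσdef, h]
        rw [hw]
        rcases h with h | ⟨h1, h2⟩
        · exact ⟨h.le, fun h0 => absurd h0 (ne_of_gt h)⟩
        · exact ⟨h1.symm.le, fun _ => h2⟩
      · have hw : w i = -z i := by
          simp [hwdef, hσdef, h]
        push_neg at h
        rw [hw]
        refine ⟨by simpa using h.1, fun h0 => ?_⟩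
        have : (z i).im = 0 := by simpa using h0
        have := h.2 this
        simp only [Complex.neg_re]
        linarith
    refine ⟨Complex.arg_nonneg_iff.2 him.1, ?_⟩
    rcases (Complex.arg_le_pi (w i)).lt_or_eq with h | h
    · exact h
    · exfalso
      obtain ⟨hre, him0⟩ := Complex.arg_eq_pi_iff.1 h
      have := him.2 him0
      linarith
  -- sort by argument
  set ρ : Equiv.Perm (Fin n) := Tuple.sort (fun i => (w i).arg) with hρdef
  set g : Fin n → ℂ := fun k => w (ρ k) with hgdef
  have hgmono : Monotone fun k => (g k).arg :=
    Tuple.monotone_sort (fun i => (w i).arg)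
  -- ℕ-indexed machinery
  set Gf : ℕ → ℂ := fun k => if h : k < n then g ⟨k, h⟩ else 0 with hGfdef
  set r : ℕ → ℝ := fun k => ‖Gf k‖ with hrdef
  set s : ℕ → ℝ :=
    (fun k => if h : k < n then (g ⟨k, h⟩).arg else (g ⟨0, hnn⟩).arg + π) with hsdef
  set S : ℂ := ∑ i, g i with hSdef
  set X : ℕ → ℂ := fun k => 2 * (∑ i ∈ Finset.range k, Gf i) - S with hXdef
  set E : ℕ → ℂ := fun k => Complex.exp ((s k : ℂ) * Complex.I) with hEdef
  have hsval : ∀ k (h : k < n), s k = (g ⟨k, h⟩).arg := by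
    intro k h; simp [hsdef, h]
  have hsrange : ∀ k, k < n → 0 ≤ s k ∧ s k < π := by
    intro k h; rw [hsval k h]; exact hargw _
  have hsn : s n = (g ⟨0, hnn⟩).arg + π := by simp [hsdef]
  have hsmono : ∀ k, k < n → s k ≤ s (k + 1) := by
    intro k hk
    by_cases h : k + 1 < n
    · rw [hsval k hk, hsval (k+1) h]
      exact hgmono (by simp [Fin.mk_le_mk])
    · have hkn : k + 1 = n := by omega
      rw [hkn, hsn]
      have h1 := (hsrange k hk).2
      have h2 := (hargw (ρ ⟨0, hnn⟩)).1
      rw [hsval k hk]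
      have := (hargw (ρ ⟨k, hk⟩)).2
      simp only [hgdef]
      linarith [(hargw (ρ ⟨0, hnn⟩)).1, this]
  have hsub : ∀ k, k < n → s (k+1) - s k ≤ 2 * π := by
    intro k hk
    have h0 := (hsrange k hk).1
    by_cases h : k + 1 < n
    · have := (hsrange (k+1) h).2
      have hpi := Real.pi_pos
      linarith
    · have hkn : k + 1 = n := by omega
      rw [hkn, hsn]
      have := (hargw (ρ ⟨0, hnn⟩)).2
      simp only [hgdef]
      have hpi := Real.pi_pos
      linarith [(hargw (ρ ⟨0, hnn⟩)).2]
  have hGfval : ∀ k, k < n → Gf k = (r k : ℂ) * E k := by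
    intro k h
    have hGk : Gf k = g ⟨k, h⟩ := by simp [hGfdef, h]
    simp only [hrdef, hGk, hEdef, hsval k h]
    exact (Complex.norm_mul_exp_arg_mul_I _).symm
  have hXd : ∀ k, X (k+1) - X k = 2 * Gf k := by
    intro k
    simp only [hXdef, Finset.sum_range_succ]
    ring
  have hX0 : X 0 = -S := by simp [hXdef]
  have hsumGf : ∑ i ∈ Finset.range n, Gf i = S := by
    rw [← Fin.sum_univ_eq_sum_range Gf n, hSdef]
    apply Finset.sum_congr rfl
    intro i _
    simp [hGfdef, i.isLt]
  have hXn : X n = S := by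
    rw [hXdef]; simp only [hsumGf]; ring
  have hEn : E n = -E 0 := by
    rw [hEdef]
    simp only [hsn, hsval 0 hnn]
    push_cast
    rw [add_mul, Complex.exp_add, Complex.exp_pi_mul_I]
    ring
  -- the maximum
  obtain ⟨k₀, hk₀mem, hk₀⟩ := Finset.exists_max_image (Finset.range n)
    (fun k => ‖X (k+1)‖) ⟨0, Finset.mem_range.2 hnn⟩
  set R : ℝ := ‖X (k₀+1)‖ with hRdef
  have hR0 : (0:ℝ) ≤ R := by positivity
  -- step 1 : 2 Σ r = Σ dotc increments
  have step1 : ∑ k ∈ Finset.range n, 2 * r k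
      = ∑ k ∈ Finset.range n, dotc (X (k+1) - X k) (E k) := by
    apply Finset.sum_congr rfl
    intro k hk
    have hk' := Finset.mem_range.1 hk
    rw [hXd, hGfval k hk']
    rw [show (2 : ℂ) * ((r k : ℂ) * E k) = ((2 * r k : ℝ) : ℂ) * E k by push_cast; ring]
    rw [hEdef]
    exact (dotc_exp (2 * r k) (s k)).symm
  -- abel + boundary terms vanish
  have hbound : dotc (X n) (E n) - dotc (X 0) (E 0) = 0 := by
    rw [hXn, hX0, hEn]
    simp only [dotc, Complex.neg_re, Complex.neg_im]
    ring
  have step2 : ∑ k ∈ Finset.range n, 2 * r k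
      = ∑ k ∈ Finset.range n, dotc (X (k+1)) (E k - E (k+1)) := by
    rw [step1, abel X E n]
    linarith [hbound]
  -- termwise bound
  have step3 : ∀ k ∈ Finset.range n,
      dotc (X (k+1)) (E k - E (k+1)) ≤ R * (2 * Real.sin ((s (k+1) - s k) / 2)) := by
    intro k hk
    have hk' := Finset.mem_range.1 hk
    have h1 := dotc_le_abs (X (k+1)) (E k - E (k+1))
    have h2 : ‖E k - E (k+1)‖ = 2 * Real.sin ((s (k+1) - s k) / 2) := by
      rw [hEdef]
      exact chord (hsmono k hk') (hsub k hk')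
    calc dotc (X (k+1)) (E k - E (k+1))
        ≤ ‖X (k+1)‖ * ‖E k - E (k+1)‖ := h1
      _ ≤ R * ‖E k - E (k+1)‖ :=
          mul_le_mul_of_nonneg_right (hk₀ k hk) (by positivity)
      _ = R * (2 * Real.sin ((s (k+1) - s k) / 2)) := by rw [h2]
  -- sum of the increments
  have hδsum : ∑ k ∈ Finset.range n, (s (k+1) - s k) = π := by
    rw [Finset.sum_range_sub s n, hsn, hsval 0 hnn]
    ring
  have hδnonneg : ∀ k ∈ Finset.range n, 0 ≤ s (k+1) - s k := by
    intro k hk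
    have := hsmono k (Finset.mem_range.1 hk)
    linarith
  have hδle : ∀ k ∈ Finset.range n, s (k+1) - s k ≤ π := by
    intro k hk
    have h := Finset.single_le_sum hδnonneg hk
    rw [hδsum] at h
    exact h
  -- Jensen
  have jensen : ∑ k ∈ Finset.range n, Real.sin ((s (k+1) - s k) / 2)
      ≤ n * Real.sin (π / (2 * n)) := by
    have hconc : ConcaveOn ℝ (Icc 0 π) Real.sin := strictConcaveOn_sin_Icc.concaveOn
    have h : (∑ k ∈ Finset.range n, (n:ℝ)⁻¹ • Real.sin ((s (k+1) - s k) / 2))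
        ≤ Real.sin (∑ k ∈ Finset.range n, (n:ℝ)⁻¹ • ((s (k+1) - s k) / 2)) := by
      apply hconc.le_map_sum
      · intro i _
        positivity
      · rw [Finset.sum_const, Finset.card_range, nsmul_eq_mul]
        exact mul_inv_cancel₀ (ne_of_gt hn0)
      · intro i hi
        exact Set.mem_Icc.mpr ⟨by have := hδnonneg i hi; linarith,
          by have := hδle i hi; have hpi := Real.pi_pos; linarith⟩
    have hsum : ∑ i ∈ Finset.range n, (n:ℝ)⁻¹ • ((s (i+1) - s i) / 2) = π / (2 * n) := by
      have he : ∀ i : ℕ, (n:ℝ)⁻¹ • ((s (i+1) - s i) / 2) = (s (i+1) - s i) / (2 * (n:ℝ)) := by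
        intro i; rw [smul_eq_mul]; ring
      rw [Finset.sum_congr rfl fun i _ => he i, ← Finset.sum_div, hδsum]
    rw [hsum] at h
    have h2 : ∑ i ∈ Finset.range n, (n:ℝ)⁻¹ • Real.sin ((s (i+1) - s i) / 2)
        = (n:ℝ)⁻¹ * ∑ k ∈ Finset.range n, Real.sin ((s (k+1) - s k) / 2) := by
      simp [Finset.mul_sum]
    rw [h2] at h
    calc ∑ k ∈ Finset.range n, Real.sin ((s (k+1) - s k) / 2)
        = n * ((n:ℝ)⁻¹ * ∑ k ∈ Finset.range n, Real.sin ((s (k+1) - s k) / 2)) := by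
          field_simp
      _ ≤ n * Real.sin (π / (2 * n)) := by
          apply mul_le_mul_of_nonneg_left h (le_of_lt hn0)
  -- combine
  have main : ∑ k ∈ Finset.range n, 2 * r k ≤ 2 * R * (n * Real.sin (π / (2 * n))) := by
    rw [step2]
    calc ∑ k ∈ Finset.range n, dotc (X (k+1)) (E k - E (k+1))
        ≤ ∑ k ∈ Finset.range n, R * (2 * Real.sin ((s (k+1) - s k) / 2)) :=
          Finset.sum_le_sum step3
      _ = 2 * R * ∑ k ∈ Finset.range n, Real.sin ((s (k+1) - s k) / 2) := by
          rw [Finset.mul_sum]; apply Finset.sum_congr rfl; intro k _; ring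
      _ ≤ 2 * R * (n * Real.sin (π / (2 * n))) := by
          apply mul_le_mul_of_nonneg_left jensen (by linarith)
  -- identify the sum of r's
  have hA : ∑ k ∈ Finset.range n, r k = ∑ i, ‖z i‖ := by
    rw [← Fin.sum_univ_eq_sum_range r n]
    have h1 : ∀ i : Fin n, r i = ‖z (ρ i)‖ := by
      intro i
      rw [hrdef]
      simp only [hGfdef, i.isLt, dif_pos, Fin.eta, hgdef]
      exact habsw (ρ i)
    rw [Finset.sum_congr rfl fun i _ => h1 i]
    exact Equiv.sum_comp ρ (fun i => ‖z i‖)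
  -- final sign choice
  have hk₀n : k₀ + 1 ≤ n := Finset.mem_range.1 hk₀mem
  refine ⟨fun j => (if ((ρ.symm j).1 < k₀ + 1) then (1:ℝ) else -1) * σ j, ?_, ?_⟩
  · intro j
    rcases hσ j with h | h <;> by_cases hc : ((ρ.symm j).1 < k₀ + 1) <;> simp [h, hc]
  · have hsum : (∑ j, ((if ((ρ.symm j).1 < k₀ + 1) then (1:ℝ) else -1) * σ j) • z j)
        = X (k₀ + 1) := by
      have h1 : ∀ i : Fin n,
          ((if ((ρ.symm (ρ i)).1 < k₀ + 1) then (1:ℝ) else -1) * σ (ρ i)) • z (ρ i)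
          = (if (i.1 < k₀ + 1) then (1:ℝ) else -1) • g i := by
        intro i
        rw [Equiv.symm_apply_apply]
        rw [mul_smul]
      calc (∑ j, ((if ((ρ.symm j).1 < k₀ + 1) then (1:ℝ) else -1) * σ j) • z j)
          = ∑ i, ((if ((ρ.symm (ρ i)).1 < k₀ + 1) then (1:ℝ) else -1) * σ (ρ i)) • z (ρ i) :=
            (Equiv.sum_comp ρ _).symm
        _ = ∑ i, (if (i.1 < k₀ + 1) then (1:ℝ) else -1) • g i :=
            Finset.sum_congr rfl fun i _ => h1 i
        _ = ∑ i : Fin n, (2 * (if (i.1 < k₀ + 1) then g i else 0) - g i) := by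
            apply Finset.sum_congr rfl
            intro i _
            by_cases hc : i.1 < k₀ + 1 <;> simp [hc] <;> ring
        _ = 2 * (∑ i : Fin n, (if (i.1 < k₀ + 1) then g i else 0)) - S := by
            rw [Finset.sum_sub_distrib, ← Finset.mul_sum]
        _ = X (k₀ + 1) := by
            rw [hXdef]
            congr 1
            congr 1
            have h2 : ∑ i : Fin n, (if (i.1 < k₀ + 1) then g i else 0)
                = ∑ k ∈ Finset.range n, (if (k < k₀ + 1) then Gf k else 0) := by
              rw [← Fin.sum_univ_eq_sum_range (fun k => if (k < k₀ + 1) then Gf k else 0) n]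
              apply Finset.sum_congr rfl
              intro i _
              simp [hGfdef, i.isLt]
            rw [h2]
            rw [← Finset.sum_subset (Finset.range_subset_range.mpr hk₀n)
              (fun x _ hnx => if_neg (by simpa using hnx))]
            apply Finset.sum_congr rfl
            intro k hk
            exact if_pos (Finset.mem_range.1 hk)
    rw [hsum]
    -- arithmetic conclusion
    have hs : 0 < Real.sin (π / (2 * n)) := by
      apply Real.sin_pos_of_pos_of_lt_pi
      · positivity
      · have hpi := Real.pi_pos
        have h1n : (1:ℝ) ≤ n := by exact_mod_cast hn
        rw [div_lt_iff₀ (by positivity)]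
        nlinarith
    have hns : 0 < (n:ℝ) * Real.sin (π / (2 * n)) := by positivity
    have hA2 : ∑ i, ‖z i‖ ≤ R * ((n:ℝ) * Real.sin (π / (2 * n))) := by
      have : (2:ℝ) * ∑ k ∈ Finset.range n, r k = ∑ k ∈ Finset.range n, 2 * r k := by
        rw [Finset.mul_sum]
      nlinarith [main, hA, this]
    rw [hRdef] at hA2
    rw [div_mul_eq_mul_div, one_mul, div_le_iff₀ hns]
    linarith

end Stmt3Aux

theorem stmt3 (n : ℕ) (hn : 1 ≤ n) (u : Fin n → E2) :
    ∃ ε : Fin n → ℝ, (∀ i, ε i = 1 ∨ ε i = -1) ∧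
      (1 / (n * Real.sin (π / (2 * n)))) * ∑ i, ‖u i‖ ≤ ‖∑ i, ε i • u i‖ := by
  classical
  set z : Fin n → ℂ := fun i => ((u i 0 : ℝ) : ℂ) + ((u i 1 : ℝ) : ℂ) * Complex.I with hzdef
  have habs : ∀ (v : E2), ‖((v 0 : ℝ) : ℂ) + ((v 1 : ℝ) : ℂ) * Complex.I‖ = ‖v‖ := by
    intro v
    rw [Complex.norm_add_mul_I, EuclideanSpace.norm_eq]
    congr 1
    simp [Fin.sum_univ_two, sq_abs]
  obtain ⟨ε, hε, hineq⟩ := Stmt3Aux.keyC n hn z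
  refine ⟨ε, hε, ?_⟩
  have h1 : ∑ i, ‖z i‖ = ∑ i, ‖u i‖ :=
    Finset.sum_congr rfl fun i _ => habs (u i)
  have h2 : (∑ i, ε i • z i)
      = (((∑ i, ε i • u i) 0 : ℝ) : ℂ) + (((∑ i, ε i • u i) 1 : ℝ) : ℂ) * Complex.I := by
    have hre : ∀ j : Fin 2, (∑ i, ε i • u i) j = ∑ i, ε i * u i j := by
      intro j
      rw [WithLp.ofLp_sum, Finset.sum_apply]
      apply Finset.sum_congr rfl
      intro i _
      rfl
    apply Complex.ext
    · simp [hzdef, Complex.re_sum, hre, Complex.smul_re]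
    · simp [hzdef, Complex.im_sum, hre, Complex.smul_im]
  have h3 : ‖∑ i, ε i • z i‖ = ‖∑ i, ε i • u i‖ := by
    rw [h2]; exact habs _
  rw [← h1, ← h3]
  exact hineq
end
end

section
/- For integers n ≥ k ≥ 1, the quantity c(2,n,k) — the minimum over n unit vectors in ℝ² of the maximum norm of a signed sum of k of them — satisfies c(2,n,k) ≥ 1/sin(π/(2k)). -/
open Real Metric Set Pointwise

open scoped Classical

noncomputable section

/-- The set of norms of all signed sums of `k` of the vectors `u`. -/
def signedSubsetSums (n k : ℕ) (u : Fin n → E2) : Set ℝ :=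
  {x : ℝ | ∃ (s : Finset (Fin n)) (ε : Fin n → ℝ), s.card = k ∧
    (∀ i, ε i = 1 ∨ ε i = -1) ∧ x = ‖∑ i ∈ s, ε i • u i‖}

/-- `c(2,n,k)`: minimum over `n` unit vectors of the largest norm of a signed sum of `k` of them. -/
def c2 (n k : ℕ) : ℝ :=
  sInf {M : ℝ | ∃ u : Fin n → E2, (∀ i, ‖u i‖ = 1) ∧ IsGreatest (signedSubsetSums n k u) M}



/-! ### Auxiliary lemmas -/

section Aux

lemma my_abs_cos_add_int_mul_pi (x : ℝ) (n : ℤ) : |Real.cos (x + n * π)| = |Real.cos x| := by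
  rw [Real.cos_add_int_mul_pi]
  rcases Int.even_or_odd n with h | h
  · rw [h.neg_one_zpow, one_mul]
  · rw [h.neg_one_zpow, neg_one_mul, abs_neg]

lemma my_exists_cos_sin (x y : ℝ) (h : x^2 + y^2 = 1) : ∃ θ, Real.cos θ = x ∧ Real.sin θ = y := by
  have hx1 : -1 ≤ x := by nlinarith
  have hx2 : x ≤ 1 := by nlinarith
  rcases le_or_gt 0 y with hy | hy
  · exact ⟨Real.arccos x, Real.cos_arccos hx1 hx2, by
      rw [Real.sin_arccos, show (1:ℝ) - x^2 = y^2 by linarith, Real.sqrt_sq hy]⟩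
  · exact ⟨-Real.arccos x, by rw [Real.cos_neg]; exact Real.cos_arccos hx1 hx2, by
      rw [Real.sin_neg, Real.sin_arccos, show (1:ℝ) - x^2 = y^2 by linarith,
        Real.sqrt_sq_eq_abs, abs_of_neg hy]; ring⟩

lemma my_exists_polar (x y : ℝ) : ∃ θ, x = Real.sqrt (x^2+y^2) * Real.cos θ ∧ y = Real.sqrt (x^2+y^2) * Real.sin θ := by
  rcases eq_or_lt_of_le (Real.sqrt_nonneg (x^2+y^2)) with h0 | h0
  · have hx : x = 0 ∧ y = 0 := by
      have := Real.sqrt_eq_zero'.mp h0.symm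
      constructor <;> nlinarith [sq_nonneg x, sq_nonneg y]
    exact ⟨0, by rw [← h0]; simpa using hx.1, by rw [← h0]; simpa using hx.2⟩
  · set r := Real.sqrt (x^2+y^2) with hr
    have hr2 : r^2 = x^2 + y^2 := Real.sq_sqrt (by positivity)
    obtain ⟨θ, hc, hs⟩ := my_exists_cos_sin (x/r) (y/r) (by field_simp; linarith)
    exact ⟨θ, by rw [hc]; field_simp, by rw [hs]; field_simp⟩

lemma my_cos_lt_imp {u v : ℝ} (hv0 : 0 ≤ v) (huπ : u ≤ π)
    (h : Real.cos v < Real.cos u) : u < v := by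
  by_contra hle
  push_neg at hle
  exact absurd (Real.cos_le_cos_of_nonneg_of_le_pi hv0 huπ hle) (not_le.mpr h)

/-- Reduction of an angle to `[0, π)`. -/
def myRed (t : ℝ) : ℝ := t - π * ⌊t / π⌋

lemma myRed_mem (t : ℝ) : myRed t ∈ Set.Ico 0 π := by
  have hπ : (0:ℝ) < π := Real.pi_pos
  have h1 : myRed t = π * Int.fract (t / π) := by
    rw [myRed, Int.fract]; field_simp
  constructor
  · rw [h1]; exact mul_nonneg hπ.le (Int.fract_nonneg _)
  · rw [h1]
    calc π * Int.fract (t/π) < π * 1 := mul_lt_mul_of_pos_left (Int.fract_lt_one _) hπ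
    _ = π := mul_one π

lemma my_abs_cos_red_sub (s t : ℝ) : |Real.cos (myRed s - myRed t)| = |Real.cos (s - t)| := by
  have h : myRed s - myRed t = (s - t) + (↑(⌊t/π⌋ - ⌊s/π⌋) : ℤ) * π := by
    rw [myRed, myRed]; push_cast; ring
  rw [h, my_abs_cos_add_int_mul_pi]

/-- Pigeonhole: among lines with angular half-widths `α i` summing to `π/2`,
two of them are angularly close. -/
lemma my_pigeon (m : ℕ) (α θ : Fin (m+2) → ℝ) (hθ : ∀ i, θ i ∈ Set.Ico 0 π)
    (hα : ∀ i, 0 < α i) (hαs : ∑ i, α i = π/2) :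
    ∃ a b, a ≠ b ∧ Real.cos (α a + α b) ≤ |Real.cos (θ a - θ b)| := by
  by_contra hcon
  push_neg at hcon
  have hαlt : ∀ j, α j < π / 2 := by
    intro j
    have h1 : α j + ∑ i ∈ Finset.univ.erase j, α i = π/2 := by
      rw [Finset.add_sum_erase _ _ (Finset.mem_univ j)]
      exact hαs
    have h2 : 0 < ∑ i ∈ Finset.univ.erase j, α i := by
      apply Finset.sum_pos (fun i _ => hα i)
      rcases exists_ne j with ⟨i, hi⟩
      exact ⟨i, Finset.mem_erase.mpr ⟨hi, Finset.mem_univ i⟩⟩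
    linarith
  set σ := Tuple.sort θ with hσ
  set g : Fin (m+2) → ℝ := θ ∘ σ with hg
  have hmono : Monotone g := Tuple.monotone_sort θ
  have hne : ∀ i : Fin (m+2), (i : Fin (m+2)) + 1 ≠ i := by
    intro i h
    have h1 : (1 : Fin (m+2)) = 0 := by
      have := congrArg (fun x => x - i) h
      simpa [add_comm] using this
    exact absurd h1 one_ne_zero
  set gap : Fin (m+2) → ℝ :=
    fun i => g (i+1) - g i + (if i = Fin.last (m+1) then π else 0) with hgap
  have hsum : ∑ i, gap i = π := by
    rw [hgap]
    rw [Finset.sum_add_distrib, Finset.sum_sub_distrib]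
    have h1 : ∑ i : Fin (m+2), g (i + 1) = ∑ i, g i :=
      Fintype.sum_equiv (Equiv.addRight 1) _ _ (fun i => rfl)
    rw [h1]
    simp
  have hlt : ∀ i : Fin (m+2), α (σ (i+1)) + α (σ i) < gap i := by
    intro i
    have hab : σ (i+1) ≠ σ i := fun h => hne i (σ.injective h)
    have hc := hcon (σ (i+1)) (σ i) hab
    have hA0 : 0 < α (σ (i+1)) + α (σ i) := by
      have := hα (σ (i+1)); have := hα (σ i); linarith
    have hAπ : α (σ (i+1)) + α (σ i) < π := by
      have := hαlt (σ (i+1)); have := hαlt (σ i); linarith [Real.pi_pos]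
    by_cases hi : i = Fin.last (m+1)
    · subst hi
      have hi1 : Fin.last (m+1) + 1 = 0 := Fin.last_add_one (m+1)
      have hd0 : g 0 ≤ g (Fin.last (m+1)) := hmono (Fin.zero_le _)
      have hd : g (Fin.last (m+1)) - g 0 < π := by
        have h2 := (hθ (σ (Fin.last (m+1)))).2
        have h3 := (hθ (σ 0)).1
        simp only [hg, Function.comp_apply] at *
        linarith
      have hgapi : gap (Fin.last (m+1)) = π - (g (Fin.last (m+1)) - g 0) := by
        simp only [hgap, hi1, eq_self_iff_true, if_true]
        ring
      have habs : Real.cos (π - (g (Fin.last (m+1)) - g 0))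
          ≤ |Real.cos (θ (σ (Fin.last (m+1) + 1)) - θ (σ (Fin.last (m+1))))| := by
        rw [hi1]
        have he : θ (σ (0 : Fin (m+2))) - θ (σ (Fin.last (m+1))) = -(g (Fin.last (m+1)) - g 0) := by
          simp only [hg, Function.comp_apply]; ring
        rw [he, Real.cos_neg, Real.cos_pi_sub]
        exact neg_le_abs _
      have hcc : Real.cos (π - (g (Fin.last (m+1)) - g 0))
          < Real.cos (α (σ (Fin.last (m+1) + 1)) + α (σ (Fin.last (m+1)))) :=
        lt_of_le_of_lt habs hc
      have hres := my_cos_lt_imp (v := π - (g (Fin.last (m+1)) - g 0))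
        (by linarith) (le_of_lt hAπ) hcc
      linarith [hgapi]
    · have hival : ((i+1 : Fin (m+2)) : ℕ) = (i : ℕ) + 1 := by
        rw [Fin.val_add_one]; simp [hi]
      have hle : i ≤ i + 1 := by
        rw [Fin.le_def, hival]; omega
      have hd0 : g i ≤ g (i+1) := hmono hle
      have hd : g (i+1) - g i < π := by
        have h2 := (hθ (σ (i+1))).2
        have h3 := (hθ (σ i)).1
        simp only [hg, Function.comp_apply] at *
        linarith
      have hgapi : gap i = g (i+1) - g i := by
        simp only [hgap, if_neg hi]
        ring
      have habs : Real.cos (g (i+1) - g i) ≤ |Real.cos (θ (σ (i+1)) - θ (σ i))| := by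
        have he : θ (σ (i+1)) - θ (σ i) = g (i+1) - g i := by
          simp only [hg, Function.comp_apply]
        rw [he]
        exact le_abs_self _
      have hcc : Real.cos (g (i+1) - g i) < Real.cos (α (σ (i+1)) + α (σ i)) :=
        lt_of_le_of_lt habs hc
      have hres := my_cos_lt_imp (v := g (i+1) - g i) (by linarith) (le_of_lt hAπ) hcc
      linarith [hgapi]
  have hsum2 : ∑ i : Fin (m+2), (α (σ (i+1)) + α (σ i)) = π := by
    rw [Finset.sum_add_distrib]
    have h1 : ∑ i : Fin (m+2), α (σ (i+1)) = ∑ i, α (σ i) :=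
      Fintype.sum_equiv (Equiv.addRight 1) _ _ (fun i => rfl)
    rw [h1, Equiv.sum_comp σ α, hαs]
    ring
  have hfin : (π : ℝ) < π := by
    calc π = ∑ i : Fin (m+2), (α (σ (i+1)) + α (σ i)) := hsum2.symm
    _ < ∑ i, gap i := Finset.sum_lt_sum_of_nonempty Finset.univ_nonempty (fun i _ => hlt i)
    _ = π := hsum
  exact lt_irrefl _ hfin

set_option maxHeartbeats 2000000 in
/-- The key merging induction. -/
lemma my_key : ∀ m (α θ : Fin (m+1) → ℝ), (∀ i, 0 < α i) → (∑ i, α i = π/2) →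
    ∃ ψ, 1 ≤ ∑ i, Real.sin (α i) * |Real.cos (θ i - ψ)| := by
  intro m
  induction m with
  | zero =>
    intro α θ hα hαs
    rw [Fin.sum_univ_succ, Fin.sum_univ_zero, add_zero] at hαs
    refine ⟨θ 0, ?_⟩
    rw [Fin.sum_univ_succ, Fin.sum_univ_zero, add_zero, sub_self, Real.cos_zero, abs_one,
      mul_one, hαs, Real.sin_pi_div_two]
  | succ m IH =>
    intro α θ hα hαs
    have hsub : ∀ s : Finset (Fin (m+2)), ∑ i ∈ s, α i ≤ π/2 := by
      intro s
      rw [← hαs]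
      exact Finset.sum_le_sum_of_subset_of_nonneg (Finset.subset_univ s)
        (fun i _ _ => (hα i).le)
    have hαle : ∀ i, α i ≤ π/2 := by
      intro i
      have := hsub {i}
      rwa [Finset.sum_singleton] at this
    obtain ⟨a, b, hab, hcos'⟩ := my_pigeon m α (fun i => myRed (θ i)) (fun i => myRed_mem _) hα hαs
    have hcos : Real.cos (α a + α b) ≤ |Real.cos (θ a - θ b)| := by
      rwa [my_abs_cos_red_sub] at hcos'
    have habπ : α a + α b ≤ π/2 := by
      have := hsub {a, b}
      rwa [Finset.sum_pair hab] at this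
    have hπ : (0:ℝ) < π := Real.pi_pos
    set sa := Real.sin (α a) with hsa
    set sb := Real.sin (α b) with hsb
    have hsa0 : 0 < sa := Real.sin_pos_of_pos_of_lt_pi (hα a) (by linarith [hαle a])
    have hsb0 : 0 < sb := Real.sin_pos_of_pos_of_lt_pi (hα b) (by linarith [hαle b])
    set ε : ℝ := if 0 ≤ Real.cos (θ a - θ b) then 1 else -1 with hε
    have hε2 : ε^2 = 1 := by
      rw [hε]; split_ifs <;> norm_num
    have hεabs : ε * Real.cos (θ a - θ b) = |Real.cos (θ a - θ b)| := by
      rw [hε]; split_ifs with h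
      · rw [one_mul, abs_of_nonneg h]
      · push_neg at h
        rw [abs_of_neg h]; ring
    set x := sa * Real.cos (θ a) + ε * sb * Real.cos (θ b) with hx
    set y := sa * Real.sin (θ a) + ε * sb * Real.sin (θ b) with hy
    set A := Real.sqrt (x^2 + y^2) with hA
    obtain ⟨θc, hxc, hyc⟩ := my_exists_polar x y
    have hA0 : 0 ≤ A := Real.sqrt_nonneg _
    have hA2 : A^2 = sa^2 + sb^2 + 2*sa*sb*|Real.cos (θ a - θ b)| := by
      have h1 : A^2 = x^2 + y^2 := Real.sq_sqrt (by positivity)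
      have h2 : x^2 + y^2 = sa^2*((Real.sin (θ a))^2 + (Real.cos (θ a))^2)
          + ε^2*sb^2*((Real.sin (θ b))^2 + (Real.cos (θ b))^2)
          + 2*ε*sa*sb*(Real.cos (θ a) * Real.cos (θ b) + Real.sin (θ a) * Real.sin (θ b)) := by
        rw [hx, hy]; ring
      rw [h1, h2, Real.sin_sq_add_cos_sq, Real.sin_sq_add_cos_sq, ← Real.cos_sub, hε2]
      have h3 : 2*ε*sa*sb*Real.cos (θ a - θ b) = 2*sa*sb*(ε*Real.cos (θ a - θ b)) := by ring
      rw [h3, hεabs]; ring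
    have hsinab0 : 0 ≤ Real.sin (α a + α b) :=
      Real.sin_nonneg_of_nonneg_of_le_pi (by linarith [hα a, hα b]) (by linarith)
    have hAge : Real.sin (α a + α b) ≤ A := by
      have hsq : (Real.sin (α a + α b))^2 ≤ A^2 := by
        rw [hA2, Real.sin_add]
        have e1 := Real.sin_sq_add_cos_sq (α a)
        have e2 := Real.sin_sq_add_cos_sq (α b)
        have e3 : Real.cos (α a + α b) = Real.cos (α a) * Real.cos (α b)
            - Real.sin (α a) * Real.sin (α b) := Real.cos_add _ _
        nlinarith [mul_pos hsa0 hsb0, hcos]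
      calc Real.sin (α a + α b) = Real.sqrt ((Real.sin (α a + α b))^2) :=
            (Real.sqrt_sq hsinab0).symm
      _ ≤ Real.sqrt (A^2) := Real.sqrt_le_sqrt hsq
      _ = A := Real.sqrt_sq hA0
    have hmerge : ∀ ψ, Real.sin (α a + α b) * |Real.cos (θc - ψ)|
        ≤ sa * |Real.cos (θ a - ψ)| + sb * |Real.cos (θ b - ψ)| := by
      intro ψ
      have hid : A * Real.cos (θc - ψ) = sa * Real.cos (θ a - ψ) + ε * (sb * Real.cos (θ b - ψ)) := by
        rw [Real.cos_sub, Real.cos_sub, Real.cos_sub]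
        have h4 : A * (Real.cos θc * Real.cos ψ + Real.sin θc * Real.sin ψ)
            = (A * Real.cos θc) * Real.cos ψ + (A * Real.sin θc) * Real.sin ψ := by ring
        rw [h4, ← hxc, ← hyc, hx, hy]; ring
      have h1 : Real.sin (α a + α b) * |Real.cos (θc - ψ)| ≤ A * |Real.cos (θc - ψ)| :=
        mul_le_mul_of_nonneg_right hAge (abs_nonneg _)
      have h2 : A * |Real.cos (θc - ψ)| = |A * Real.cos (θc - ψ)| := by
        rw [abs_mul, abs_of_nonneg hA0]
      have h3 : |sa * Real.cos (θ a - ψ) + ε * (sb * Real.cos (θ b - ψ))|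
          ≤ sa * |Real.cos (θ a - ψ)| + sb * |Real.cos (θ b - ψ)| := by
        calc |sa * Real.cos (θ a - ψ) + ε * (sb * Real.cos (θ b - ψ))|
            ≤ |sa * Real.cos (θ a - ψ)| + |ε * (sb * Real.cos (θ b - ψ))| := abs_add_le _ _
        _ = sa * |Real.cos (θ a - ψ)| + sb * |Real.cos (θ b - ψ)| := by
            rw [abs_mul, abs_mul, abs_mul, abs_of_nonneg hsa0.le, abs_of_nonneg hsb0.le]
            have h5 : |ε| = 1 := by rw [hε]; split_ifs <;> norm_num
            rw [h5, one_mul]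
      rw [hid] at h2
      linarith [h1, h2 ▸ le_refl (A * |Real.cos (θc - ψ)|), h3]
    obtain ⟨a₀, ha₀⟩ := Fin.exists_succAbove_eq hab
    set α' : Fin (m+1) → ℝ := fun i => if i = a₀ then α a + α b else α (b.succAbove i) with hα'
    set θ' : Fin (m+1) → ℝ := fun i => if i = a₀ then θc else θ (b.succAbove i) with hθ'
    have hα'pos : ∀ i, 0 < α' i := by
      intro i
      rw [hα']
      dsimp only
      split_ifs
      · linarith [hα a, hα b]
      · exact hα _
    have hsum' : ∑ i, α' i = π/2 := by
      have h1 : ∑ i : Fin (m+2), α i = α b + ∑ i : Fin (m+1), α (b.succAbove i) :=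
        Fin.sum_univ_succAbove α b
      have h2 : ∑ i : Fin (m+1), α' i
          = ∑ i ∈ Finset.univ.erase a₀, α' i + α' a₀ :=
        (Finset.sum_erase_add _ _ (Finset.mem_univ a₀)).symm
      have h3 : ∑ i : Fin (m+1), α (b.succAbove i)
          = ∑ i ∈ Finset.univ.erase a₀, α (b.succAbove i) + α (b.succAbove a₀) :=
        (Finset.sum_erase_add _ _ (Finset.mem_univ a₀)).symm
      have h4 : ∑ i ∈ Finset.univ.erase a₀, α' i
          = ∑ i ∈ Finset.univ.erase a₀, α (b.succAbove i) := by
        apply Finset.sum_congr rfl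
        intro i hi
        rw [hα']
        dsimp only
        rw [if_neg (Finset.ne_of_mem_erase hi)]
      have h5 : α' a₀ = α a + α b := by rw [hα']; dsimp only; rw [if_pos rfl]
      rw [h2, h4, h5, ha₀] at *
      linarith [hαs, h1, h3]
    obtain ⟨ψ, hψ⟩ := IH α' θ' hα'pos hsum'
    refine ⟨ψ, ?_⟩
    set F : Fin (m+2) → ℝ := fun j => Real.sin (α j) * |Real.cos (θ j - ψ)| with hF
    set F' : Fin (m+1) → ℝ := fun i => Real.sin (α' i) * |Real.cos (θ' i - ψ)| with hF'
    have hs1 : ∑ j : Fin (m+2), F j = F b + (∑ i ∈ Finset.univ.erase a₀, F (b.succAbove i) + F a) := by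
      rw [Fin.sum_univ_succAbove F b]
      congr 1
      rw [← ha₀]
      exact (Finset.sum_erase_add _ _ (Finset.mem_univ a₀)).symm
    have hs2 : ∑ i : Fin (m+1), F' i = ∑ i ∈ Finset.univ.erase a₀, F (b.succAbove i) + F' a₀ := by
      rw [← Finset.sum_erase_add _ _ (Finset.mem_univ a₀)]
      congr 1
      apply Finset.sum_congr rfl
      intro i hi
      rw [hF', hF, hα', hθ']
      dsimp only
      rw [if_neg (Finset.ne_of_mem_erase hi), if_neg (Finset.ne_of_mem_erase hi)]
    have hkey : F' a₀ ≤ F a + F b := by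
      rw [hF', hα', hθ', hF]
      dsimp only
      rw [if_pos rfl, if_pos rfl]
      exact hmerge ψ
    have hmono : ∑ i : Fin (m+1), F' i ≤ ∑ j : Fin (m+2), F j := by
      rw [hs1, hs2]; linarith
    calc (1:ℝ) ≤ ∑ i : Fin (m+1), F' i := hψ
    _ ≤ ∑ j : Fin (m+2), F j := hmono

/-- For any `k ≥ 1` lines, some direction sees total absolute projection
at least `1 / sin (π / (2k))`. -/
lemma my_angle_bound (k : ℕ) (hk : 1 ≤ k) (θ : Fin k → ℝ) :
    ∃ ψ, 1 / Real.sin (π / (2 * (k:ℝ))) ≤ ∑ i, |Real.cos (θ i - ψ)| := by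
  obtain ⟨m, rfl⟩ : ∃ m, k = m + 1 := ⟨k - 1, by omega⟩
  have hπ : (0:ℝ) < π := Real.pi_pos
  have hk0 : (0:ℝ) < (m+1 : ℕ) := by positivity
  have hargpos : 0 < π / (2 * ((m+1 : ℕ):ℝ)) := by positivity
  have harglt : π / (2 * ((m+1 : ℕ):ℝ)) ≤ π / 2 := by
    apply div_le_div_of_nonneg_left hπ.le (by norm_num)
    push_cast; nlinarith [show (0:ℝ) ≤ (m:ℝ) from Nat.cast_nonneg m]
  have hs0 : 0 < Real.sin (π / (2 * ((m+1 : ℕ):ℝ))) :=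
    Real.sin_pos_of_pos_of_lt_pi hargpos (by linarith)
  obtain ⟨ψ, hψ⟩ := my_key m (fun _ => π / (2 * ((m+1 : ℕ):ℝ))) θ (fun _ => hargpos)
    (by
      rw [Finset.sum_const, Finset.card_univ, Fintype.card_fin, nsmul_eq_mul]
      field_simp)
  refine ⟨ψ, ?_⟩
  rw [div_le_iff₀ hs0]
  have h1 : ∑ i, Real.sin (π / (2 * ((m+1 : ℕ):ℝ))) * |Real.cos (θ i - ψ)|
      = Real.sin (π / (2 * ((m+1 : ℕ):ℝ))) * ∑ i, |Real.cos (θ i - ψ)| := by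
    rw [Finset.mul_sum]
  rw [h1] at hψ
  linarith [hψ]

lemma my_sq_coords_of_norm_one (v : E2) (hv : ‖v‖ = 1) : (v 0)^2 + (v 1)^2 = 1 := by
  have h := EuclideanSpace.norm_eq v
  rw [hv] at h
  have h2 : Real.sqrt (∑ i : Fin 2, ‖v i‖^2) = 1 := h.symm
  have h3 : (∑ i : Fin 2, ‖v i‖^2) = 1 := Real.sqrt_eq_one.mp h2
  rw [Fin.sum_univ_two] at h3
  simpa [sq_abs, Real.norm_eq_abs] using h3

/-- The unit vector in direction `ψ`. -/
def myWvec (ψ : ℝ) : E2 := (WithLp.equiv 2 (Fin 2 → ℝ)).symm ![Real.cos ψ, Real.sin ψ]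

lemma myWvec_norm (ψ : ℝ) : ‖myWvec ψ‖ = 1 := by
  rw [myWvec, EuclideanSpace.norm_eq, Fin.sum_univ_two]
  simp only [WithLp.equiv_symm_apply, PiLp.toLp_apply, Matrix.cons_val_zero, Matrix.cons_val_one,
    Matrix.head_cons, Real.norm_eq_abs, sq_abs]
  rw [Real.cos_sq_add_sin_sq]
  exact Real.sqrt_one

lemma my_inner_wvec (v : E2) (ψ : ℝ) :
    (inner ℝ v (myWvec ψ) : ℝ) = v 0 * Real.cos ψ + v 1 * Real.sin ψ := by
  rw [PiLp.inner_apply, Fin.sum_univ_two]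
  simp [myWvec, WithLp.equiv_symm_apply, PiLp.toLp_apply, RCLike.inner_apply, mul_comm]

lemma my_exists_greatest (n k : ℕ) (hkn : k ≤ n) (u : Fin n → E2) :
    ∃ M, IsGreatest (signedSubsetSums n k u) M := by
  set T : Set ((Finset (Fin n)) × (Fin n → ℝ)) :=
    {p | p.1.card = k ∧ ∀ i, p.2 i = 1 ∨ p.2 i = -1} with hT
  have hTsub : T ⊆ (Set.univ : Set (Finset (Fin n))) ×ˢ (Set.pi Set.univ fun _ : Fin n => ({1, -1} : Set ℝ)) := by
    rintro ⟨s, ε⟩ ⟨h1, h2⟩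
    refine ⟨Set.mem_univ _, fun i _ => ?_⟩
    simp only [Set.mem_insert_iff, Set.mem_singleton_iff]
    exact h2 i
  have hTfin : T.Finite := by
    apply Set.Finite.subset _ hTsub
    exact (Set.finite_univ).prod (Set.Finite.pi fun _ => (Set.finite_singleton (-1 : ℝ)).insert 1)
  have himg : signedSubsetSums n k u = (fun p : (Finset (Fin n)) × (Fin n → ℝ) => ‖∑ i ∈ p.1, p.2 i • u i‖) '' T := by
    ext x
    constructor
    · rintro ⟨s, ε, h1, h2, h3⟩
      exact ⟨⟨s, ε⟩, ⟨h1, h2⟩, h3.symm⟩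
    · rintro ⟨⟨s, ε⟩, ⟨h1, h2⟩, h3⟩
      exact ⟨s, ε, h1, h2, h3.symm⟩
  have hne : (signedSubsetSums n k u).Nonempty := by
    obtain ⟨s, _, hcard⟩ := Finset.exists_subset_card_eq (by simpa using hkn : k ≤ (Finset.univ : Finset (Fin n)).card)
    exact ⟨‖∑ i ∈ s, (1:ℝ) • u i‖, s, (fun _ => 1), hcard, fun i => Or.inl rfl, rfl⟩
  have hfin : (signedSubsetSums n k u).Finite := by
    rw [himg]; exact hTfin.image _
  obtain ⟨M, hM, hmax⟩ := Set.Finite.exists_maximalFor id _ hfin hne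
  refine ⟨M, hM, fun b hb => ?_⟩
  rcases le_total b M with h | h
  · exact h
  · exact (hmax hb h).ge

end Aux

theorem stmt6 (n k : ℕ) (h1 : 1 ≤ k) (h2 : k ≤ n) :
    c2 n k ≥ 1 / Real.sin (π / (2 * k)) := by
  rw [ge_iff_le, c2]
  apply le_csInf
  · obtain ⟨M, hM⟩ := my_exists_greatest n k h2 (fun _ => myWvec 0)
    exact ⟨M, ⟨fun _ => myWvec 0, fun i => myWvec_norm 0, hM⟩⟩
  · rintro M ⟨u, hu, hG⟩
    obtain ⟨s, -, hcard⟩ := Finset.exists_subset_card_eq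
      (show k ≤ (Finset.univ : Finset (Fin n)).card by simpa using h2)
    have hexθ : ∀ i : Fin n, ∃ t, Real.cos t = u i 0 ∧ Real.sin t = u i 1 :=
      fun i => my_exists_cos_sin _ _ (my_sq_coords_of_norm_one (u i) (hu i))
    choose Θ hΘc hΘs using hexθ
    set o := s.orderIsoOfFin hcard with ho
    obtain ⟨ψ, hψ⟩ := my_angle_bound k h1 (fun j => Θ (o j))
    set ε : Fin n → ℝ := fun i => if 0 ≤ Real.cos (Θ i - ψ) then 1 else -1 with hε
    have hεmem : ∀ i, ε i = 1 ∨ ε i = -1 := by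
      intro i
      rw [hε]
      dsimp only
      split_ifs
      · exact Or.inl rfl
      · exact Or.inr rfl
    have hmem : ‖∑ i ∈ s, ε i • u i‖ ∈ signedSubsetSums n k u := ⟨s, ε, hcard, hεmem, rfl⟩
    have hMge : ‖∑ i ∈ s, ε i • u i‖ ≤ M := hG.2 hmem
    have hterm : ∀ i : Fin n, ε i * Real.cos (Θ i - ψ) = |Real.cos (Θ i - ψ)| := by
      intro i
      rw [hε]
      dsimp only
      split_ifs with h
      · rw [one_mul, abs_of_nonneg h]
      · push_neg at h
        rw [abs_of_neg h]; ring
    have hinner : (inner ℝ (∑ i ∈ s, ε i • u i) (myWvec ψ) : ℝ)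
        = ∑ i ∈ s, |Real.cos (Θ i - ψ)| := by
      rw [sum_inner]
      apply Finset.sum_congr rfl
      intro i hi
      rw [real_inner_smul_left, my_inner_wvec]
      rw [← hΘc i, ← hΘs i, ← Real.cos_sub]
      exact hterm i
    have hsum_eq : ∑ i ∈ s, |Real.cos (Θ i - ψ)| = ∑ j : Fin k, |Real.cos (Θ (o j) - ψ)| := by
      rw [← Finset.sum_coe_sort s (fun i => |Real.cos (Θ i - ψ)|)]
      exact (Equiv.sum_comp o.toEquiv (fun x : {x // x ∈ s} => |Real.cos (Θ x - ψ)|)).symm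
    have hnorm : (inner ℝ (∑ i ∈ s, ε i • u i) (myWvec ψ) : ℝ) ≤ ‖∑ i ∈ s, ε i • u i‖ := by
      calc (inner ℝ (∑ i ∈ s, ε i • u i) (myWvec ψ) : ℝ)
          ≤ ‖∑ i ∈ s, ε i • u i‖ * ‖myWvec ψ‖ := real_inner_le_norm _ _
      _ = ‖∑ i ∈ s, ε i • u i‖ := by rw [myWvec_norm, mul_one]
    calc 1 / Real.sin (π / (2 * k)) ≤ ∑ j : Fin k, |Real.cos (Θ (o j) - ψ)| := hψ
    _ = ∑ i ∈ s, |Real.cos (Θ i - ψ)| := hsum_eq.symm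
    _ = (inner ℝ (∑ i ∈ s, ε i • u i) (myWvec ψ) : ℝ) := hinner.symm
    _ ≤ ‖∑ i ∈ s, ε i • u i‖ := hnorm
    _ ≤ M := hMge
end
end

section
/- For symmetric convex bodies K¹,…,Kⁿ ⊂ ℝ², the circumradius of their Minkowski sum satisfies R(K¹ + … + Kⁿ) ≥ (1/(n·sin(π/(2n))))·(R(K¹) + … + R(Kⁿ)). -/
open Real Metric Set Pointwise

open scoped Classical

noncomputable section

/-- real pairing on ℂ -/
def zrp (x u : ℂ) : ℝ := (x * (starRingEnd ℂ) u).re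

lemma rp_le (x u : ℂ) : zrp x u ≤ ‖x‖ * ‖u‖ := by
  calc zrp x u ≤ ‖x * (starRingEnd ℂ) u‖ := Complex.re_le_norm _
  _ = ‖x‖ * ‖u‖ := by rw [norm_mul, Complex.norm_conj]

lemma rp_add (x y u : ℂ) : zrp (x + y) u = zrp x u + zrp y u := by
  simp [zrp, add_mul]

lemma rp_sub (x y u : ℂ) : zrp (x - y) u = zrp x u - zrp y u := by
  simp [zrp, sub_mul]

lemma rp_neg (x u : ℂ) : zrp (-x) u = - zrp x u := by simp [zrp]

lemma rp_add_right (x u v : ℂ) : zrp x (u + v) = zrp x u + zrp x v := by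
  simp [zrp, mul_add]

lemma rp_sub_right (x u v : ℂ) : zrp x (u - v) = zrp x u - zrp x v := by
  simp [zrp, mul_sub]

lemma rp_real_mul (c : ℝ) (x u : ℂ) : zrp ((c : ℂ) * x) u = c * zrp x u := by
  simp [zrp, mul_assoc]

lemma rp_self_exp (θ : ℝ) : zrp (Complex.exp (θ * Complex.I)) (Complex.exp (θ * Complex.I)) = 1 := by
  rw [zrp, Complex.mul_conj]
  have := Complex.norm_exp_ofReal_mul_I θ
  rw [Complex.norm_def] at this
  have h2 : Complex.normSq (Complex.exp ((θ:ℂ) * Complex.I)) = 1 := by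
    nlinarith [Complex.normSq_nonneg (Complex.exp ((θ:ℂ) * Complex.I)), Real.sq_sqrt (Complex.normSq_nonneg (Complex.exp ((θ:ℂ) * Complex.I)))]
  rw [h2]; simp

lemma zexp_re_im (θ : ℝ) : (Complex.exp ((θ:ℂ) * Complex.I)).re = Real.cos θ ∧
    (Complex.exp ((θ:ℂ) * Complex.I)).im = Real.sin θ := by
  rw [Complex.exp_mul_I]
  constructor <;> simp [Complex.cos_ofReal_re, Complex.sin_ofReal_re]

/-- chord length -/
lemma zabs_exp_sub_exp (a b : ℝ) (hab : a ≤ b) (hwin : b - a ≤ 2 * π) :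
    ‖Complex.exp (b * Complex.I) - Complex.exp (a * Complex.I)‖
      = 2 * Real.sin ((b - a) / 2) := by
  have hre := zexp_re_im a
  have hre' := zexp_re_im b
  rw [Complex.norm_def, Complex.normSq_apply]
  have h1 : (Complex.exp ((b:ℂ) * Complex.I) - Complex.exp ((a:ℂ) * Complex.I)).re
      = Real.cos b - Real.cos a := by simp [Complex.sub_re, hre.1, hre'.1]
  have h2 : (Complex.exp ((b:ℂ) * Complex.I) - Complex.exp ((a:ℂ) * Complex.I)).im
      = Real.sin b - Real.sin a := by simp [Complex.sub_im, hre.2, hre'.2]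
  rw [h1, h2]
  have hcos : Real.cos (b - a) = Real.cos b * Real.cos a + Real.sin b * Real.sin a :=
    Real.cos_sub b a
  have hc2 : Real.cos (b - a) = 2 * Real.cos ((b-a)/2) ^ 2 - 1 := by
    have := Real.cos_two_mul ((b-a)/2); rw [← this]; ring_nf
  have hs2 : Real.sin ((b-a)/2) ^ 2 = 1 - Real.cos ((b-a)/2) ^ 2 := Real.sin_sq _
  have hsin_nonneg : 0 ≤ Real.sin ((b - a) / 2) := by
    apply Real.sin_nonneg_of_nonneg_of_le_pi <;> linarith
  have hpyth_a : Real.cos a ^ 2 + Real.sin a ^ 2 = 1 := by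
    have := Real.sin_sq_add_cos_sq a; linarith
  have hpyth_b : Real.cos b ^ 2 + Real.sin b ^ 2 = 1 := by
    have := Real.sin_sq_add_cos_sq b; linarith
  have key : (Real.cos b - Real.cos a) * (Real.cos b - Real.cos a)
      + (Real.sin b - Real.sin a) * (Real.sin b - Real.sin a)
      = (2 * Real.sin ((b - a) / 2)) ^ 2 := by nlinarith
  rw [key, Real.sqrt_sq (by linarith)]

/-- sum of two unit vectors -/
lemma zabs_exp_add_exp (a b : ℝ) (hab : a ≤ b) (hwin : b - a ≤ π) :
    ‖Complex.exp (a * Complex.I) + Complex.exp (b * Complex.I)‖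
      = 2 * Real.cos ((b - a) / 2) := by
  have hre := zexp_re_im a
  have hre' := zexp_re_im b
  rw [Complex.norm_def, Complex.normSq_apply]
  have h1 : (Complex.exp ((a:ℂ) * Complex.I) + Complex.exp ((b:ℂ) * Complex.I)).re
      = Real.cos a + Real.cos b := by simp [Complex.add_re, hre.1, hre'.1]
  have h2 : (Complex.exp ((a:ℂ) * Complex.I) + Complex.exp ((b:ℂ) * Complex.I)).im
      = Real.sin a + Real.sin b := by simp [Complex.add_im, hre.2, hre'.2]
  rw [h1, h2]
  have hcos : Real.cos (b - a) = Real.cos b * Real.cos a + Real.sin b * Real.sin a :=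
    Real.cos_sub b a
  have hc2 : Real.cos (b - a) = 2 * Real.cos ((b-a)/2) ^ 2 - 1 := by
    have := Real.cos_two_mul ((b-a)/2); rw [← this]; ring_nf
  have hcos_nonneg : 0 ≤ Real.cos ((b - a) / 2) := by
    apply Real.cos_nonneg_of_mem_Icc
    constructor <;> [linarith [Real.pi_pos]; linarith]
  have hpyth_a : Real.cos a ^ 2 + Real.sin a ^ 2 = 1 := by
    have := Real.sin_sq_add_cos_sq a; linarith
  have hpyth_b : Real.cos b ^ 2 + Real.sin b ^ 2 = 1 := by
    have := Real.sin_sq_add_cos_sq b; linarith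
  have key : (Real.cos a + Real.cos b) * (Real.cos a + Real.cos b)
      + (Real.sin a + Real.sin b) * (Real.sin a + Real.sin b)
      = (2 * Real.cos ((b - a) / 2)) ^ 2 := by nlinarith
  rw [key, Real.sqrt_sq (by linarith)]

lemma zcore (m : ℕ) (r θ : ℕ → ℝ) (ρ : ℝ)
    (hr : ∀ k, 0 ≤ r k)
    (hmono : ∀ j k, j ≤ k → k ≤ m → θ j ≤ θ k)
    (hwin : θ m - θ 0 ≤ π)
    (hρ : ∀ ε : ℕ → ℝ, (∀ k, ε k = 1 ∨ ε k = -1) →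
      ‖∑ k ∈ Finset.range (m+1),
        ((ε k : ℝ) : ℂ) * ((r k : ℂ) * Complex.exp ((θ k : ℂ) * Complex.I))‖ ≤ ρ) :
    ∑ k ∈ Finset.range (m+1), r k ≤ (m+1) * Real.sin (π / (2*(m+1))) * ρ := by
  have hpi := Real.pi_pos
  have hθle : ∀ k, k ≤ m → θ 0 ≤ θ k ∧ θ k ≤ θ m := fun k hk =>
    ⟨hmono 0 k (Nat.zero_le _) hk, hmono k m hk le_rfl⟩
  set θ' : ℕ → ℝ := fun k => θ (min k m) with hθ'def
  have hθ'eq : ∀ k, k ≤ m → θ' k = θ k := by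
    intro k hk; simp only [hθ'def]; rw [min_eq_left hk]
  set u : ℕ → ℂ := fun k => Complex.exp ((θ' k : ℂ) * Complex.I) with hudef
  set w : ℕ → ℂ := fun k => ((r k : ℝ) : ℂ) * u k with hwdef
  set P : ℕ → ℂ := fun k =>
    ∑ i ∈ Finset.range (m+1), (((if k ≤ i then (1:ℝ) else -1) : ℝ) : ℂ) * w i with hPdef
  have hPabs : ∀ k, ‖P k‖ ≤ ρ := by
    intro k
    have h := hρ (fun i => if k ≤ i then (1:ℝ) else -1) (by
      intro i; by_cases h : k ≤ i <;> simp [h])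
    have hsum : (∑ j ∈ Finset.range (m+1),
        (((if k ≤ j then (1:ℝ) else -1) : ℝ) : ℂ) * ((r j : ℂ) * Complex.exp ((θ j : ℂ) * Complex.I)))
        = P k := by
      rw [hPdef]
      apply Finset.sum_congr rfl
      intro i hi
      have him : i ≤ m := Nat.lt_succ_iff.mp (Finset.mem_range.mp hi)
      rw [hwdef]
      simp only [hudef]
      rw [hθ'eq i him]
    rw [hsum] at h
    exact h
  have hρ0 : 0 ≤ ρ := le_trans (norm_nonneg _) (hPabs 0)
  have hPdiff : ∀ k, k ≤ m → P k - P (k+1) = 2 * w k := by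
    intro k hk
    rw [hPdef]
    simp only
    rw [← Finset.sum_sub_distrib]
    have : ∀ i ∈ Finset.range (m+1),
        ((((if k ≤ i then (1:ℝ) else -1) : ℝ) : ℂ) * w i -
         (((if k+1 ≤ i then (1:ℝ) else -1) : ℝ) : ℂ) * w i)
        = if i = k then 2 * w i else 0 := by
      intro i _
      by_cases hik : i = k
      · subst hik
        simp [Nat.not_succ_le_self]
        ring
      · have : (k ≤ i) ↔ (k + 1 ≤ i) := by omega
        by_cases h2 : k ≤ i
        · rw [if_pos h2, if_pos (this.mp h2)]; simp [hik]
        · rw [if_neg h2, if_neg (fun hc => h2 (this.mpr hc))]; simp [hik]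
    rw [Finset.sum_congr rfl this, Finset.sum_ite_eq' (Finset.range (m+1)) k (fun i => 2 * w i)]
    rw [if_pos (Finset.mem_range.mpr (Nat.lt_succ_of_le hk))]
  have hPlast : P (m+1) = - P 0 := by
    rw [hPdef]
    simp only
    rw [← Finset.sum_neg_distrib]
    apply Finset.sum_congr rfl
    intro i hi
    have him : i ≤ m := Nat.lt_succ_iff.mp (Finset.mem_range.mp hi)
    rw [if_neg (by omega), if_pos (Nat.zero_le _)]
    push_cast
    ring
  -- value of telescoping sum
  have hterm : ∀ k ∈ Finset.range (m+1), zrp (P k - P (k+1)) (u k) = 2 * r k := by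
    intro k hk
    have hkm : k ≤ m := Nat.lt_succ_iff.mp (Finset.mem_range.mp hk)
    rw [hPdiff k hkm]
    have h2 : (2 : ℂ) * w k = (((2 * r k : ℝ)) : ℂ) * u k := by
      rw [hwdef]; push_cast; ring
    rw [h2, rp_real_mul]
    have : zrp (u k) (u k) = 1 := rp_self_exp (θ' k)
    rw [this]; ring
  -- Abel decomposition, pointwise
  have habel : ∀ k, zrp (P k - P (k+1)) (u k)
      = (zrp (P k) (u k) - zrp (P (k+1)) (u (k+1))) + zrp (P (k+1)) (u (k+1) - u k) := by
    intro k
    rw [rp_sub, rp_sub_right]; ring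
  have hsum1 : ∑ k ∈ Finset.range (m+1), (2 * r k)
      = (zrp (P 0) (u 0) - zrp (P (m+1)) (u (m+1)))
        + ∑ k ∈ Finset.range (m+1), zrp (P (k+1)) (u (k+1) - u k) := by
    rw [← Finset.sum_congr rfl hterm]
    rw [Finset.sum_congr rfl (fun k _ => habel k), Finset.sum_add_distrib,
      Finset.sum_range_sub' (fun k => zrp (P k) (u k))]
  have hulast : u (m+1) = u m := by
    simp only [hudef, hθ'def]
    norm_num
  have hG : zrp (P (m+1)) (u (m+1)) = - zrp (P 0) (u m) := by
    rw [hulast, hPlast, rp_neg]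
  have hsum2 : ∑ k ∈ Finset.range (m+1), zrp (P (k+1)) (u (k+1) - u k)
      = ∑ k ∈ Finset.range m, zrp (P (k+1)) (u (k+1) - u k) := by
    rw [Finset.sum_range_succ, hulast]
    simp [zrp]
  -- bounds
  set A : ℝ := θ m - θ 0 with hAdef
  have hA0 : 0 ≤ A := by have := (hθle m le_rfl).1; simp [hAdef]; linarith
  have hboundary : zrp (P 0) (u 0) + zrp (P 0) (u m) ≤ ρ * (2 * Real.sin ((π - A) / 2)) := by
    have h1 : zrp (P 0) (u 0) + zrp (P 0) (u m) = zrp (P 0) (u 0 + u m) := (rp_add_right _ _ _).symm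
    rw [h1]
    have h2 : ‖u 0 + u m‖ = 2 * Real.cos (A / 2) := by
      have e0 : θ' 0 = θ 0 := hθ'eq 0 (Nat.zero_le _)
      have em : θ' m = θ m := hθ'eq m le_rfl
      simp only [hudef]
      rw [e0, em]
      rw [zabs_exp_add_exp (θ 0) (θ m) (by linarith) (by rw [hAdef] at hwin; linarith)]
    have h3 : Real.cos (A / 2) = Real.sin ((π - A) / 2) := by
      rw [show (π - A)/2 = π/2 - A/2 by ring, Real.sin_pi_div_two_sub]
    calc zrp (P 0) (u 0 + u m) ≤ ‖P 0‖ * ‖u 0 + u m‖ := rp_le _ _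
      _ ≤ ρ * ‖u 0 + u m‖ :=
          mul_le_mul_of_nonneg_right (hPabs 0) (norm_nonneg _)
      _ = ρ * (2 * Real.sin ((π - A) / 2)) := by rw [h2, h3]
  have hmiddle : ∀ k ∈ Finset.range m, zrp (P (k+1)) (u (k+1) - u k)
      ≤ ρ * (2 * Real.sin ((θ (k+1) - θ k) / 2)) := by
    intro k hk
    have hkm : k + 1 ≤ m := Finset.mem_range.mp hk
    have e1 : θ' (k+1) = θ (k+1) := hθ'eq _ hkm
    have e2 : θ' k = θ k := hθ'eq _ (by omega)
    have hgap0 : θ k ≤ θ (k+1) := hmono k (k+1) (by omega) hkm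
    have hgapwin : θ (k+1) - θ k ≤ 2 * π := by
      have h1 := (hθle k (by omega)).1
      have h2 := (hθle (k+1) hkm).2
      linarith
    have h2 : ‖u (k+1) - u k‖ = 2 * Real.sin ((θ (k+1) - θ k) / 2) := by
      simp only [hudef]
      rw [e1, e2]
      exact zabs_exp_sub_exp (θ k) (θ (k+1)) hgap0 hgapwin
    calc zrp (P (k+1)) (u (k+1) - u k)
        ≤ ‖P (k+1)‖ * ‖u (k+1) - u k‖ := rp_le _ _
      _ ≤ ρ * ‖u (k+1) - u k‖ :=
          mul_le_mul_of_nonneg_right (hPabs _) (norm_nonneg _)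
      _ = ρ * (2 * Real.sin ((θ (k+1) - θ k) / 2)) := by rw [h2]
  -- gap function
  set d : ℕ → ℝ := fun k => if k < m then θ (k+1) - θ k else π - A with hddef
  have hdsum : ∑ k ∈ Finset.range (m+1), d k = π := by
    rw [Finset.sum_range_succ]
    have h1 : ∑ k ∈ Finset.range m, d k = ∑ k ∈ Finset.range m, (θ (k+1) - θ k) := by
      apply Finset.sum_congr rfl
      intro k hk
      rw [hddef]; simp only
      rw [if_pos (Finset.mem_range.mp hk)]
    rw [h1, Finset.sum_range_sub θ m]
    rw [hddef]; simp only
    rw [if_neg (lt_irrefl m)]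
    rw [hAdef]; ring
  have hdmem : ∀ k ∈ Finset.range (m+1), d k / 2 ∈ Set.Icc (0:ℝ) π := by
    intro k hk
    rw [hddef]; simp only
    by_cases h : k < m
    · rw [if_pos h]
      have hgap0 : θ k ≤ θ (k+1) := hmono k (k+1) (by omega) (by omega)
      have h1 := (hθle k (by omega)).1
      have h2 := (hθle (k+1) (by omega)).2
      constructor <;> [linarith; linarith [hwin]]
    · rw [if_neg h]
      constructor <;> [linarith [hwin]; linarith [hA0]]
  -- Jensen
  have hJ : ∑ k ∈ Finset.range (m+1), Real.sin (d k / 2)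
      ≤ (m+1) * Real.sin (π / (2*(m+1))) := by
    have hconc : ConcaveOn ℝ (Set.Icc 0 π) Real.sin := strictConcaveOn_sin_Icc.concaveOn
    have hcard : ((m+1 : ℕ) : ℝ) ≠ 0 := by positivity
    have hJ0 := hconc.le_map_sum (t := Finset.range (m+1))
      (w := fun _ => ((m+1 : ℕ) : ℝ)⁻¹) (p := fun k => d k / 2)
      (by intro i _; positivity)
      (by rw [Finset.sum_const, Finset.card_range, nsmul_eq_mul]; field_simp)
      hdmem
    have hpt : ∑ i ∈ Finset.range (m+1), ((m+1 : ℕ) : ℝ)⁻¹ • (d i / 2) = π / (2*(m+1)) := by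
      rw [← Finset.smul_sum]
      have hsd : ∑ i ∈ Finset.range (m+1), d i / 2 = π / 2 := by
        rw [← Finset.sum_div, hdsum]
      rw [hsd, smul_eq_mul, inv_mul_eq_div, div_eq_div_iff hcard (by positivity)]
      push_cast
      ring
    rw [hpt] at hJ0
    have hJ1 : ((m+1 : ℕ) : ℝ)⁻¹ * ∑ k ∈ Finset.range (m+1), Real.sin (d k / 2)
        ≤ Real.sin (π / (2*(m+1))) := by
      rw [Finset.mul_sum]
      simpa [smul_eq_mul] using hJ0
    calc ∑ k ∈ Finset.range (m+1), Real.sin (d k / 2)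
        = ((m+1:ℕ):ℝ) * (((m+1 : ℕ) : ℝ)⁻¹ * ∑ k ∈ Finset.range (m+1), Real.sin (d k / 2)) := by
          field_simp
      _ ≤ ((m+1:ℕ):ℝ) * Real.sin (π / (2*(m+1))) := by
          apply mul_le_mul_of_nonneg_left hJ1 (by positivity)
      _ = (m+1) * Real.sin (π / (2*(m+1))) := by norm_cast
  -- assemble
  have hassemble : ∑ k ∈ Finset.range (m+1), (2 * r k)
      ≤ ρ * ∑ k ∈ Finset.range (m+1), (2 * Real.sin (d k / 2)) := by
    rw [hsum1, hG, hsum2]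
    have hExpand : ρ * ∑ k ∈ Finset.range (m+1), (2 * Real.sin (d k / 2))
        = ρ * (2 * Real.sin ((π - A)/2)) + ∑ k ∈ Finset.range m, ρ * (2 * Real.sin ((θ (k+1) - θ k) / 2)) := by
      rw [Finset.sum_range_succ]
      have h1 : ∀ k ∈ Finset.range m, (2 * Real.sin (d k / 2)) = 2 * Real.sin ((θ (k+1) - θ k)/2) := by
        intro k hk
        rw [hddef]; simp only
        rw [if_pos (Finset.mem_range.mp hk)]
      rw [Finset.sum_congr rfl h1]
      rw [hddef]; simp only
      rw [if_neg (lt_irrefl m)]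
      rw [mul_add, Finset.mul_sum]
      ring
    rw [hExpand]
    have hb := hboundary
    have hm := Finset.sum_le_sum hmiddle
    have hrw : zrp (P 0) (u 0) - - zrp (P 0) (u m) = zrp (P 0) (u 0) + zrp (P 0) (u m) := by ring
    rw [hrw]
    linarith
  have hfinal : ρ * ∑ k ∈ Finset.range (m+1), (2 * Real.sin (d k / 2))
      ≤ ρ * (2 * ((m+1) * Real.sin (π / (2*(m+1))))) := by
    apply mul_le_mul_of_nonneg_left _ hρ0
    have : ∑ k ∈ Finset.range (m+1), (2 * Real.sin (d k / 2))
        = 2 * ∑ k ∈ Finset.range (m+1), Real.sin (d k / 2) := by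
      rw [Finset.mul_sum]
    rw [this]
    linarith
  have h2r : ∑ k ∈ Finset.range (m+1), (2 * r k) = 2 * ∑ k ∈ Finset.range (m+1), r k := by
    rw [Finset.mul_sum]
  rw [h2r] at hassemble
  nlinarith [hassemble, hfinal]

lemma zpolar (v : ℂ) : ∃ σ θf : ℝ, (σ = 1 ∨ σ = -1) ∧ 0 ≤ θf ∧ θf < π ∧
    v = (σ : ℂ) * ((‖v‖ : ℂ) * Complex.exp ((θf : ℂ) * Complex.I)) := by
  have hv := Complex.norm_mul_exp_arg_mul_I v
  rcases lt_or_ge (Complex.arg v) 0 with h | h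
  · refine ⟨-1, Complex.arg v + π, Or.inr rfl, by linarith [Complex.neg_pi_lt_arg v],
      by linarith, ?_⟩
    have he : ((Complex.arg v + π : ℝ) : ℂ) * Complex.I
        = (Complex.arg v : ℂ) * Complex.I + (π : ℂ) * Complex.I := by push_cast; ring
    rw [he, Complex.exp_add, Complex.exp_pi_mul_I]
    calc v = (‖v‖ : ℂ) * Complex.exp ((Complex.arg v : ℂ) * Complex.I) := hv.symm
      _ = _ := by push_cast; ring
  · rcases eq_or_lt_of_le (Complex.arg_le_pi v) with h2 | h2
    · refine ⟨-1, 0, Or.inr rfl, le_rfl, Real.pi_pos, ?_⟩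
      have he : ((0:ℝ):ℂ) * Complex.I = 0 := by push_cast; ring
      rw [he, Complex.exp_zero]
      calc v = (‖v‖ : ℂ) * Complex.exp ((Complex.arg v : ℂ) * Complex.I) := hv.symm
        _ = (‖v‖ : ℂ) * Complex.exp ((π:ℂ) * Complex.I) := by rw [h2]
        _ = _ := by rw [Complex.exp_pi_mul_I]; push_cast; ring
    · refine ⟨1, Complex.arg v, Or.inl rfl, h, h2, ?_⟩
      calc v = (‖v‖ : ℂ) * Complex.exp ((Complex.arg v : ℂ) * Complex.I) := hv.symm
        _ = _ := by push_cast; ring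

lemma zsignbound (n : ℕ) (hn : 1 ≤ n) (v : Fin n → ℂ) (ρ : ℝ)
    (hρ : ∀ ε : Fin n → ℝ, (∀ i, ε i = 1 ∨ ε i = -1) →
      ‖∑ i, ((ε i : ℝ) : ℂ) * v i‖ ≤ ρ) :
    ∑ i, ‖v i‖ ≤ n * Real.sin (π / (2*n)) * ρ := by
  choose σ θf hσ hθ0 hθπ hveq using fun i => zpolar (v i)
  have hkey : ∀ j, ((‖v j‖ : ℝ) : ℂ) * Complex.exp ((θf j : ℂ) * Complex.I)
      = ((σ j : ℝ) : ℂ) * v j := by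
    intro j
    rcases hσ j with h | h <;>
    · conv_rhs => rw [hveq j]
      rw [h]; push_cast; ring
  set τ := Tuple.sort θf with hτ
  have hτmono : Monotone (θf ∘ τ) := Tuple.monotone_sort θf
  set m := n - 1 with hm
  have hmn : m + 1 = n := Nat.succ_pred_eq_of_pos hn
  set r' : ℕ → ℝ := fun k => if h : k < n then ‖v (τ ⟨k, h⟩)‖ else 0 with hr'
  set θ' : ℕ → ℝ := fun k => if h : k < n then θf (τ ⟨k, h⟩) else 0 with hθ'
  have hcore := zcore m r' θ' ρ
    (by intro k; rw [hr']; by_cases h : k < n <;> simp [h, norm_nonneg])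
    (by
      intro j k hjk hkm
      have hkn : k < n := by omega
      have hjn : j < n := by omega
      rw [hθ']
      simp only [dif_pos hkn, dif_pos hjn]
      exact hτmono (by exact hjk : (⟨j, hjn⟩ : Fin n) ≤ ⟨k, hkn⟩))
    (by
      have h0 : (0:ℕ) < n := hn
      have hmlt : m < n := by omega
      rw [hθ']
      simp only [dif_pos hmlt, dif_pos h0]
      have := hθπ (τ ⟨m, hmlt⟩)
      have := hθ0 (τ ⟨0, h0⟩)
      linarith)
    (by
      intro ε hε
      set ε' : Fin n → ℝ := fun j => ε (τ.symm j : Fin n) * σ j with hε'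
      have hsum : (∑ k ∈ Finset.range (m+1),
          ((ε k : ℝ) : ℂ) * ((r' k : ℂ) * Complex.exp ((θ' k : ℂ) * Complex.I)))
          = ∑ j, ((ε' j : ℝ) : ℂ) * v j := by
        rw [hmn, Finset.sum_range]
        rw [← Equiv.sum_comp τ (fun j => ((ε' j : ℝ) : ℂ) * v j)]
        apply Finset.sum_congr rfl
        intro i _
        have hlt : (i : ℕ) < n := i.isLt
        rw [hr', hθ']
        simp only [dif_pos hlt]
        have hfin : (⟨(i:ℕ), hlt⟩ : Fin n) = i := by ext; rfl
        rw [hfin]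
        rw [hkey (τ i), hε']
        simp only [Equiv.symm_apply_apply]
        push_cast
        ring
      rw [hsum]
      apply hρ
      intro j
      rcases hε (τ.symm j : Fin n) with h1 | h1 <;> rcases hσ j with h2 | h2 <;>
        simp [hε', h1, h2])
  -- convert conclusion
  have hL : ∑ k ∈ Finset.range (m+1), r' k = ∑ i, ‖v i‖ := by
    rw [hmn, Finset.sum_range]
    rw [← Equiv.sum_comp τ (fun j => ‖v j‖)]
    apply Finset.sum_congr rfl
    intro i _
    have hlt : (i : ℕ) < n := i.isLt
    rw [hr']
    simp only [dif_pos hlt]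
  have hR : ((m:ℝ)+1) = (n:ℝ) := by exact_mod_cast congrArg (Nat.cast (R := ℝ)) hmn
  rw [hL] at hcore
  calc ∑ i, ‖v i‖ ≤ ((m:ℝ)+1) * Real.sin (π / (2*((m:ℝ)+1))) * ρ := hcore
    _ = n * Real.sin (π / (2*n)) * ρ := by rw [hR]

def zM2 : E2 → ℂ := fun x => (x 0 : ℂ) + (x 1 : ℂ) * Complex.I

lemma M2_abs (x : E2) : ‖zM2 x‖ = ‖x‖ := by
  rw [EuclideanSpace.norm_eq, Complex.norm_def, Complex.normSq_apply]
  have h1 : (zM2 x).re = x 0 := by simp [zM2]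
  have h2 : (zM2 x).im = x 1 := by simp [zM2]
  rw [h1, h2, Fin.sum_univ_two]
  congr 1
  simp [Real.norm_eq_abs, sq_abs]
  ring

lemma M2_add (x y : E2) : zM2 (x + y) = zM2 x + zM2 y := by
  simp only [zM2, PiLp.add_apply]
  push_cast
  ring

lemma M2_zero : zM2 0 = 0 := by simp [zM2]

lemma M2_smul (c : ℝ) (x : E2) : zM2 (c • x) = (c : ℂ) * zM2 x := by
  simp only [zM2, PiLp.smul_apply, smul_eq_mul]
  push_cast
  ring

lemma M2_sum {ι : Type*} (s : Finset ι) (f : ι → E2) :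
    zM2 (∑ i ∈ s, f i) = ∑ i ∈ s, zM2 (f i) := by
  induction s using Finset.cons_induction with
  | empty => simp [M2_zero]
  | cons a s ha ih => rw [Finset.sum_cons, Finset.sum_cons, M2_add, ih]

theorem stmt10 (n : ℕ) (hn : 1 ≤ n) (K : Fin n → Set E2)
    (hne : ∀ i, (K i).Nonempty) (hcp : ∀ i, IsCompact (K i)) (hcv : ∀ i, Convex ℝ (K i))
    (hsym : ∀ i, ∃ t : E2, ∀ x ∈ K i, t + t - x ∈ K i) :
    circumradius (∑ i, K i) ≥
      (1 / (n * Real.sin (π / (2 * n)))) * ∑ i, circumradius (K i) := by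
  choose t ht using hsym
  have hmax : ∀ i, ∃ x ∈ K i, ∀ y ∈ K i, ‖y - t i‖ ≤ ‖x - t i‖ := by
    intro i
    obtain ⟨x, hx, hmax⟩ := (hcp i).exists_isMaxOn (hne i)
      (Continuous.continuousOn ((continuous_id.sub continuous_const).norm))
    exact ⟨x, hx, fun y hy => isMaxOn_iff.mp hmax y hy⟩
  choose x hxK hxmax using hmax
  set v : Fin n → E2 := fun i => x i - t i with hv
  have hset : ∀ i, circumradius (K i) = ‖v i‖ := by
    intro i
    apply le_antisymm
    · apply csInf_le ⟨0, fun ρ' h => h.1⟩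
      exact ⟨norm_nonneg _, t i, fun y hy => by
        rw [mem_closedBall, dist_eq_norm]; exact hxmax i y hy⟩
    · have hmem : ‖v i‖ ∈ {ρ : ℝ | 0 ≤ ρ ∧ ∃ c : E2, K i ⊆ closedBall c ρ} :=
        ⟨norm_nonneg _, t i, fun y hy => by
          rw [mem_closedBall, dist_eq_norm]; exact hxmax i y hy⟩
      apply le_csInf ⟨_, hmem⟩
      rintro ρ' ⟨hρ'0, c, hc⟩
      have h1 : ‖x i - c‖ ≤ ρ' := by
        have := hc (hxK i); rwa [mem_closedBall, dist_eq_norm] at this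
      have h2 : ‖(t i + t i - x i) - c‖ ≤ ρ' := by
        have := hc (ht i (x i) (hxK i)); rwa [mem_closedBall, dist_eq_norm] at this
      have h3 : (2:ℝ) • (x i - t i) = (x i - c) - ((t i + t i - x i) - c) := by module
      have h4 : (2:ℝ) * ‖v i‖ = ‖(x i - c) - ((t i + t i - x i) - c)‖ := by
        rw [← h3, norm_smul, hv]
        simp
      have h5 := norm_sub_le (x i - c) ((t i + t i - x i) - c)
      have h6 := norm_sub_le (x i - c) ((t i + t i - x i) - c)
      have h7 : ‖(x i - c) - ((t i + t i - x i) - c)‖ ≤ ‖x i - c‖ + ‖(t i + t i - x i) - c‖ :=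
        norm_sub_le _ _
      linarith
  -- witness for sum
  have hsubset : (∑ i, K i) ⊆ closedBall (∑ i, t i) (∑ i, ‖v i‖) := by
    intro y hy
    rw [Set.mem_fintype_sum] at hy
    obtain ⟨g, hg, rfl⟩ := hy
    rw [mem_closedBall, dist_eq_norm]
    have he : (∑ i, g i) - (∑ i, t i) = ∑ i, (g i - t i) := by
      rw [Finset.sum_sub_distrib]
    rw [he]
    calc ‖∑ i, (g i - t i)‖ ≤ ∑ i, ‖g i - t i‖ := norm_sum_le _ _
      _ ≤ ∑ i, ‖v i‖ := Finset.sum_le_sum (fun i _ => hxmax i (g i) (hg i))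
  have hmemS : (∑ i, ‖v i‖) ∈ {ρ : ℝ | 0 ≤ ρ ∧ ∃ c : E2, (∑ i, K i) ⊆ closedBall c ρ} :=
    ⟨Finset.sum_nonneg (fun i _ => norm_nonneg _), _, hsubset⟩
  -- the sign bound
  have hsign : ∀ ε : Fin n → ℝ, (∀ i, ε i = 1 ∨ ε i = -1) →
      ‖∑ i, ε i • v i‖ ≤ circumradius (∑ i, K i) := by
    intro ε hε
    apply le_csInf ⟨_, hmemS⟩
    rintro ρ' ⟨hρ'0, c, hc⟩
    have hmem1 : ∀ i, t i + ε i • v i ∈ K i := by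
      intro i
      rcases hε i with h | h
      · rw [h, one_smul, hv]
        have : t i + (x i - t i) = x i := by module
        rw [this]; exact hxK i
      · rw [h, neg_one_smul, hv]
        have : t i + -(x i - t i) = t i + t i - x i := by module
        rw [this]; exact ht i (x i) (hxK i)
    have hmem2 : ∀ i, t i - ε i • v i ∈ K i := by
      intro i
      rcases hε i with h | h
      · rw [h, one_smul, hv]
        have : t i - (x i - t i) = t i + t i - x i := by module
        rw [this]; exact ht i (x i) (hxK i)
      · rw [h, neg_one_smul, hv]
        have : t i - -(x i - t i) = x i := by module
        rw [this]; exact hxK i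
    have ha : (∑ i, (t i + ε i • v i)) ∈ ∑ i, K i :=
      (Set.mem_fintype_sum _ _).mpr ⟨_, fun i => hmem1 i, rfl⟩
    have hb : (∑ i, (t i - ε i • v i)) ∈ ∑ i, K i :=
      (Set.mem_fintype_sum _ _).mpr ⟨_, fun i => hmem2 i, rfl⟩
    have h1 : ‖(∑ i, (t i + ε i • v i)) - c‖ ≤ ρ' := by
      have := hc ha; rwa [mem_closedBall, dist_eq_norm] at this
    have h2 : ‖(∑ i, (t i - ε i • v i)) - c‖ ≤ ρ' := by
      have := hc hb; rwa [mem_closedBall, dist_eq_norm] at this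
    have h3 : (2:ℝ) • (∑ i, ε i • v i)
        = ((∑ i, (t i + ε i • v i)) - c) - ((∑ i, (t i - ε i • v i)) - c) := by
      rw [Finset.sum_add_distrib, Finset.sum_sub_distrib]
      module
    have h4 : (2:ℝ) * ‖∑ i, ε i • v i‖
        = ‖((∑ i, (t i + ε i • v i)) - c) - ((∑ i, (t i - ε i • v i)) - c)‖ := by
      rw [← h3, norm_smul]
      simp
    have h7 := norm_sub_le ((∑ i, (t i + ε i • v i)) - c) ((∑ i, (t i - ε i • v i)) - c)
    linarith
  -- apply zsignbound
  have hsb := zsignbound n hn (fun i => zM2 (v i)) (circumradius (∑ i, K i)) (by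
    intro ε hε
    have he : (∑ i, ((ε i : ℝ) : ℂ) * zM2 (v i)) = zM2 (∑ i, ε i • v i) := by
      rw [M2_sum]
      apply Finset.sum_congr rfl
      intro i _
      exact (M2_smul (ε i) (v i)).symm
    rw [he, M2_abs]
    exact hsign ε hε)
  have hL : ∑ i, ‖zM2 (v i)‖ = ∑ i, circumradius (K i) := by
    apply Finset.sum_congr rfl
    intro i _
    rw [M2_abs, hset i]
  rw [hL] at hsb
  have hnpos : (0:ℝ) < n := by exact_mod_cast hn
  have hpos : 0 < (n:ℝ) * Real.sin (π / (2*n)) := by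
    apply mul_pos hnpos
    apply Real.sin_pos_of_pos_of_lt_pi
    · positivity
    · have h1n : (1:ℝ) ≤ (n:ℝ) := by exact_mod_cast hn
      calc π / (2*(n:ℝ)) ≤ π / 2 := by
            apply div_le_div_of_nonneg_left Real.pi_pos.le (by norm_num)
            linarith
      _ < π := by linarith [Real.pi_pos]
  rw [ge_iff_le, one_div, inv_mul_le_iff₀ hpos]
  exact hsb
end
end

section
/- The inequality R(K¹+…+Kⁿ) ≥ (1/(n sin(π/(2n))))·(R(K¹)+…+R(Kⁿ)) for symmetric planar convex bodies is sharp: equality holds when each Kⁱ is the segment [−uⁱ,uⁱ] where {±u¹,…,±uⁿ} is the vertex set of a regular 2n-gon centered at the origin. -/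
open Real Metric Set Pointwise

open scoped Classical

noncomputable section

section Aux

open scoped RealInnerProductSpace

lemma tel_cos (n : ℕ) (hn : 1 ≤ n) (x : ℝ) :
    (∑ k ∈ Finset.range n, Real.cos (x + k * (π / n))) * (2 * Real.sin (π / (2 * n)))
      = Real.sin (x + π - π / (2*n)) - Real.sin (x - π / (2*n)) := by
  have hn' : (n:ℝ) ≠ 0 := Nat.cast_ne_zero.2 (by omega)
  set h := π / (2*n) with hh
  have h2 : π / n = 2 * h := by rw [hh]; field_simp
  have key : ∀ k : ℕ, Real.cos (x + k * (π/n)) * (2 * Real.sin h)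
      = Real.sin (x + (k+1 : ℕ) * (2*h) - h) - Real.sin (x + k * (2*h) - h) := by
    intro k
    rw [h2]
    push_cast
    rw [show x + (k+1 : ℝ) * (2*h) - h = (x + k * (2*h)) + h by ring,
        show x + (k:ℝ) * (2*h) - h = (x + k * (2*h)) - h by ring,
        Real.sin_add, Real.sin_sub]
    ring
  rw [Finset.sum_mul]
  simp_rw [key]
  rw [Finset.sum_range_sub (fun k : ℕ => Real.sin (x + k * (2*h) - h))]
  have hπ : (n:ℝ) * (2*h) = π := by rw [hh]; field_simp
  norm_num
  rw [show x + (n:ℝ) * (2*h) - h = x + π - h by rw [hπ]]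

lemma tel_sin (n : ℕ) (hn : 1 ≤ n) (x : ℝ) :
    (∑ k ∈ Finset.range n, Real.sin (x + k * (π / n))) * (2 * Real.sin (π / (2 * n)))
      = Real.cos (x - π / (2*n)) - Real.cos (x + π - π / (2*n)) := by
  have hn' : (n:ℝ) ≠ 0 := Nat.cast_ne_zero.2 (by omega)
  set h := π / (2*n) with hh
  have h2 : π / n = 2 * h := by rw [hh]; field_simp
  have key : ∀ k : ℕ, Real.sin (x + k * (π/n)) * (2 * Real.sin h)
      = (- Real.cos (x + (k+1 : ℕ) * (2*h) - h)) - (- Real.cos (x + k * (2*h) - h)) := by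
    intro k
    rw [h2]
    push_cast
    rw [show x + (k+1 : ℝ) * (2*h) - h = (x + k * (2*h)) + h by ring,
        show x + (k:ℝ) * (2*h) - h = (x + k * (2*h)) - h by ring,
        Real.cos_add, Real.cos_sub]
    ring
  rw [Finset.sum_mul]
  simp_rw [key]
  rw [Finset.sum_range_sub (fun k : ℕ => - Real.cos (x + k * (2*h) - h))]
  have hπ : (n:ℝ) * (2*h) = π := by rw [hh]; field_simp
  norm_num
  rw [show x + (n:ℝ) * (2*h) - h = x + π - h by rw [hπ]]
  ring

lemma sin_pos_aux (n : ℕ) (hn : 1 ≤ n) : 0 < Real.sin (π / (2*n)) := by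
  have hn' : (0:ℝ) < n := by exact_mod_cast hn
  apply Real.sin_pos_of_pos_of_lt_pi
  · positivity
  · have h1 : π / (2*n) ≤ π / 2 := by
      apply div_le_div_of_nonneg_left Real.pi_pos.le (by norm_num)
      have h2 : (1:ℝ) ≤ n := by exact_mod_cast hn
      linarith
    linarith [Real.pi_pos]

lemma abs_cos_sum_le (n : ℕ) (hn : 1 ≤ n) (x : ℝ) :
    ∑ k ∈ Finset.range n, |Real.cos (x + k * (π / n))| ≤ 1 / Real.sin (π / (2*n)) := by
  have hn' : (0:ℝ) < n := by exact_mod_cast hn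
  have hnz : (0:ℤ) < (n:ℤ) := by exact_mod_cast hn
  have hnn : (n:ℝ) ≠ 0 := ne_of_gt hn'
  have hs : 0 < Real.sin (π / (2*n)) := sin_pos_aux n hn
  have hδ : 0 < π / n := by positivity
  set m : ℤ := ⌈(-(π/2) - x) / (π/n)⌉ with hm
  set x' : ℝ := x + m * (π/n) with hx'
  have hxl : -(π/2) ≤ x' := by
    have h0 := Int.le_ceil ((-(π/2) - x) / (π/n))
    rw [← hm, div_le_iff₀ hδ] at h0
    linarith
  have hxu : x' < -(π/2) + π/n := by
    have h0 := Int.ceil_lt_add_one ((-(π/2) - x) / (π/n))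
    rw [← hm] at h0
    have h2 := mul_lt_mul_of_pos_right h0 hδ
    rw [add_mul, div_mul_cancel₀ _ (ne_of_gt hδ)] at h2
    linarith
  set g : ℤ → ℝ := fun j => |Real.cos (x' + j * (π/n))| with hg
  have hper : ∀ (j t : ℤ), g (j + t * n) = g j := by
    intro j t
    have he : x' + ((j + t * n : ℤ) : ℝ) * (π/n) = (x' + j * (π/n)) + t * π := by
      push_cast; field_simp; ring
    simp only [hg]
    rw [he, Real.cos_add, Real.sin_int_mul_pi, mul_zero, sub_zero, abs_mul,
      Real.abs_cos_int_mul_pi, mul_one]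
  have hb : ∀ j : ℤ, 0 ≤ j % (n:ℤ) ∧ j % (n:ℤ) < n :=
    fun j => ⟨Int.emod_nonneg j (ne_of_gt hnz), Int.emod_lt_of_pos j hnz⟩
  have hgmod : ∀ j : ℤ, g j = g ((j % (n:ℤ)).toNat) := by
    intro j
    have h1 : ((j % (n:ℤ)).toNat : ℤ) = j % n := Int.toNat_of_nonneg (hb j).1
    have h2 : j = ((j % (n:ℤ)).toNat : ℤ) + (j / n) * n := by
      rw [h1]; rw [Int.emod_def]; ring
    conv_lhs => rw [h2]
    exact hper _ _
  have hinv : ∑ k ∈ Finset.range n, |Real.cos (x + k * (π/n))|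
      = ∑ k ∈ Finset.range n, |Real.cos (x' + k * (π/n))| := by
    have hrepr : ∀ k : ℕ, |Real.cos (x + k * (π/n))| = g ((k:ℤ) - m) := by
      intro k
      have he : x + (k:ℝ) * (π/n) = x' + (((k:ℤ) - m : ℤ) : ℝ) * (π/n) := by
        push_cast; ring
      simp [hg, he]
    simp_rw [hrepr]
    have hgnat : ∀ k : ℕ, g k = |Real.cos (x' + k * (π/n))| := by
      intro k; simp [hg]
    refine Finset.sum_bij' (i := fun (k : ℕ) _ => (((k : ℤ) - m) % (n:ℤ)).toNat)
      (j := fun (k : ℕ) _ => (((k : ℤ) + m) % (n:ℤ)).toNat) ?_ ?_ ?_ ?_ ?_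
    · intro k hk
      have := hb ((k:ℤ) - m)
      simp only [Finset.mem_range]
      omega
    · intro k hk
      have := hb ((k:ℤ) + m)
      simp only [Finset.mem_range]
      omega
    · intro k hk
      simp only [Finset.mem_range] at hk
      have h1 := hb ((k:ℤ) - m)
      have h3 : (((((k:ℤ) - m) % (n:ℤ)).toNat : ℤ) + m) % (n:ℤ) = (k:ℤ) % n := by
        rw [Int.toNat_of_nonneg h1.1]
        conv_rhs => rw [show (k:ℤ) = ((k:ℤ) - m) + m by ring]
        rw [Int.add_emod, Int.emod_emod_of_dvd _ dvd_rfl, ← Int.add_emod]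
      have h4 : (k:ℤ) % n = k := Int.emod_eq_of_lt (by positivity) (by exact_mod_cast hk)
      rw [h3, h4]
      omega
    · intro k hk
      simp only [Finset.mem_range] at hk
      have h1 := hb ((k:ℤ) + m)
      have h3 : (((((k:ℤ) + m) % (n:ℤ)).toNat : ℤ) - m) % (n:ℤ) = (k:ℤ) % n := by
        rw [Int.toNat_of_nonneg h1.1]
        conv_rhs => rw [show (k:ℤ) = ((k:ℤ) + m) - m by ring]
        rw [Int.sub_emod, Int.emod_emod_of_dvd _ dvd_rfl, ← Int.sub_emod]
      have h4 : (k:ℤ) % n = k := Int.emod_eq_of_lt (by positivity) (by exact_mod_cast hk)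
      rw [h3, h4]
      omega
    · intro k hk
      rw [hgmod ((k:ℤ) - m), hgnat]
  rw [hinv]
  have hnonneg : ∀ k ∈ Finset.range n, |Real.cos (x' + k * (π/n))| = Real.cos (x' + k * (π/n)) := by
    intro k hk
    simp only [Finset.mem_range] at hk
    apply abs_of_nonneg
    apply Real.cos_nonneg_of_mem_Icc
    constructor
    · have : 0 ≤ (k:ℝ) * (π/n) := by positivity
      linarith
    · have h1 : (k:ℝ) + 1 ≤ n := by exact_mod_cast hk
      have h2 : ((k:ℝ)+1) * (π/n) ≤ (n:ℝ) * (π/n) := mul_le_mul_of_nonneg_right h1 hδ.le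
      have h3 : (n:ℝ) * (π/n) = π := by field_simp
      nlinarith
  rw [Finset.sum_congr rfl hnonneg]
  have htel := tel_cos n hn x'
  have hub : Real.sin (x' + π - π/(2*n)) - Real.sin (x' - π/(2*n)) ≤ 2 := by
    have := Real.sin_le_one (x' + π - π/(2*n))
    have := Real.neg_one_le_sin (x' - π/(2*n))
    linarith
  rw [le_div_iff₀ hs]
  nlinarith [htel, hub, hs]

lemma circumradius_eq (K : Set E2) (R : ℝ) (hR : 0 ≤ R)
    (hub : K ⊆ closedBall (0:E2) R) (p : E2) (hp : p ∈ K) (hmp : -p ∈ K)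
    (hnorm : ‖p‖ = R) : circumradius K = R := by
  have hmem : R ∈ {ρ : ℝ | 0 ≤ ρ ∧ ∃ t : E2, K ⊆ closedBall t ρ} := ⟨hR, 0, hub⟩
  apply le_antisymm
  · exact csInf_le ⟨0, fun r hr => hr.1⟩ hmem
  · apply le_csInf ⟨R, hmem⟩
    rintro r ⟨hr0, t, ht⟩
    have h1 : dist p t ≤ r := ht hp
    have h2 : dist (-p) t ≤ r := ht hmp
    have h3 : dist p (-p) ≤ dist p t + dist t (-p) := dist_triangle _ _ _
    have h4 : dist p (-p) = 2 * ‖p‖ := by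
      rw [dist_eq_norm, show p - -p = (2:ℝ) • p by module, norm_smul]
      norm_num
    rw [dist_comm t (-p)] at h3
    rw [hnorm] at h4
    linarith

def vtx (ρ φ : ℝ) (n : ℕ) (k : ℤ) : E2 :=
  ρ • (WithLp.equiv 2 (Fin 2 → ℝ)).symm ![Real.cos (π * k / n + φ), Real.sin (π * k / n + φ)]

lemma vtx_apply0 (ρ φ : ℝ) (n : ℕ) (k : ℤ) : vtx ρ φ n k 0 = ρ * Real.cos (π * k / n + φ) := by
  simp [vtx]

lemma vtx_apply1 (ρ φ : ℝ) (n : ℕ) (k : ℤ) : vtx ρ φ n k 1 = ρ * Real.sin (π * k / n + φ) := by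
  simp [vtx]

lemma norm_vtx (ρ φ : ℝ) (n : ℕ) (hρ : 0 ≤ ρ) (k : ℤ) : ‖vtx ρ φ n k‖ = ρ := by
  rw [EuclideanSpace.norm_eq]
  have : ∑ i : Fin 2, ‖vtx ρ φ n k i‖ ^ 2 = ρ ^ 2 := by
    rw [Fin.sum_univ_two, vtx_apply0, vtx_apply1]
    simp only [Real.norm_eq_abs, sq_abs]
    have := Real.sin_sq_add_cos_sq (π * k / n + φ)
    nlinarith
  rw [this, Real.sqrt_sq hρ]

lemma vtx_add_n (ρ φ : ℝ) (n : ℕ) (hn : 1 ≤ n) (k : ℤ) : vtx ρ φ n (k + n) = - vtx ρ φ n k := by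
  have hnn : (n:ℝ) ≠ 0 := Nat.cast_ne_zero.2 (by omega)
  have h : π * (k + n) / n + φ = (π * k / n + φ) + π := by field_simp; ring
  unfold vtx
  push_cast
  rw [h]
  rw [Real.cos_add_pi, Real.sin_add_pi]
  ext i
  fin_cases i <;> simp

lemma vtx_inj (ρ φ : ℝ) (n : ℕ) (hρ : 0 < ρ) (hn : 1 ≤ n) (a b : ℤ)
    (h : vtx ρ φ n a = vtx ρ φ n b) : (2*(n:ℤ)) ∣ (a - b) := by
  have hnn : (n:ℝ) ≠ 0 := Nat.cast_ne_zero.2 (by omega)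
  have h0 : vtx ρ φ n a 0 = vtx ρ φ n b 0 := by rw [h]
  have h1 : vtx ρ φ n a 1 = vtx ρ φ n b 1 := by rw [h]
  rw [vtx_apply0, vtx_apply0] at h0
  rw [vtx_apply1, vtx_apply1] at h1
  have hc : Real.cos (π * a / n + φ) = Real.cos (π * b / n + φ) :=
    mul_left_cancel₀ (ne_of_gt hρ) h0
  have hs : Real.sin (π * a / n + φ) = Real.sin (π * b / n + φ) :=
    mul_left_cancel₀ (ne_of_gt hρ) h1
  have hang := Real.Angle.cos_sin_inj hc hs
  rw [Real.Angle.angle_eq_iff_two_pi_dvd_sub] at hang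
  obtain ⟨m, hm⟩ := hang
  refine ⟨m, ?_⟩
  have hπ : (0:ℝ) < π := Real.pi_pos
  have he : π * a / n + φ - (π * b / n + φ) = π * (a - b) / n := by push_cast; ring
  rw [he] at hm
  have : ((a - b : ℤ) : ℝ) = ((2 * n * m : ℤ) : ℝ) := by
    push_cast
    field_simp at hm ⊢
    nlinarith [hm]
  exact_mod_cast this

lemma mem_segment_neg (v x : E2) : x ∈ segment ℝ (-v) v ↔ ∃ t : ℝ, |t| ≤ 1 ∧ x = t • v := by
  rw [segment_eq_image]
  constructor
  · rintro ⟨θ, ⟨h0, h1⟩, rfl⟩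
    refine ⟨2*θ - 1, by rw [abs_le]; constructor <;> linarith, ?_⟩
    module
  · rintro ⟨t, ht, rfl⟩
    rw [abs_le] at ht
    exact ⟨(t+1)/2, ⟨by linarith, by linarith⟩, by module⟩

lemma polar (z : E2) : ∃ ψ : ℝ, z 0 = ‖z‖ * Real.cos ψ ∧ z 1 = ‖z‖ * Real.sin ψ := by
  by_cases hz : z = 0
  · exact ⟨0, by simp [hz]⟩
  · set c : ℂ := Complex.mk (z 0) (z 1) with hc
    have hc0 : c ≠ 0 := by
      intro h
      apply hz
      rw [Complex.ext_iff] at h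
      ext i
      fin_cases i
      · exact h.1
      · exact h.2
    have habs : ‖c‖ = ‖z‖ := by
      rw [EuclideanSpace.norm_eq, Complex.norm_def, Complex.normSq_mk]
      congr 1
      rw [show (Finset.univ : Finset (Fin 2)) = {0, 1} by decide]
      simp [sq]
    have habs0 : ‖c‖ ≠ 0 := by simp [hc0]
    refine ⟨c.arg, ?_, ?_⟩
    · rw [Complex.cos_arg hc0, ← habs]
      field_simp
      rfl
    · rw [Complex.sin_arg, ← habs]
      field_simp
      rfl

lemma circumradius_segment (v : E2) : circumradius (segment ℝ (-v) v) = ‖v‖ := by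
  apply circumradius_eq _ _ (norm_nonneg v) _ v (right_mem_segment ℝ (-v) v)
    (left_mem_segment ℝ (-v) v) rfl
  intro x hx
  rw [mem_segment_neg] at hx
  obtain ⟨t, ht, rfl⟩ := hx
  rw [mem_closedBall_zero_iff, norm_smul, Real.norm_eq_abs]
  nlinarith [abs_nonneg t, norm_nonneg v]

end Aux

open scoped RealInnerProductSpace

theorem stmt11 (n : ℕ) (hn : 1 ≤ n) (u : Fin n → E2) (ρ φ : ℝ) (hρ : 0 < ρ)
    (hreg : {x : E2 | ∃ i, x = u i ∨ x = -u i} = regularVertexSet (2 * n) 0 ρ φ) :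
    circumradius (∑ i, segment ℝ (-u i) (u i)) =
      (1 / (n * Real.sin (π / (2 * n)))) * ∑ i, circumradius (segment ℝ (-u i) (u i)) := by
  have hn' : (0:ℝ) < n := by exact_mod_cast hn
  have hnn : (n:ℝ) ≠ 0 := ne_of_gt hn'
  have hnz : (0:ℤ) < (n:ℤ) := by exact_mod_cast hn
  have hs : 0 < Real.sin (π / (2 * n)) := sin_pos_aux n hn
  -- rewrite the regular vertex set via `vtx`
  have hvfun : ∀ k : Fin (2*n),
      (0:E2) + ρ • (WithLp.equiv 2 (Fin 2 → ℝ)).symm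
        ![Real.cos (2 * π * k / (2*n : ℕ) + φ), Real.sin (2 * π * k / (2*n : ℕ) + φ)]
      = vtx ρ φ n ((k:ℕ):ℤ) := by
    intro k
    rw [zero_add]
    unfold vtx
    have hang : 2 * π * ((k:ℕ):ℝ) / ((2*n : ℕ):ℝ) + φ = π * (((k:ℕ):ℤ):ℝ) / n + φ := by
      push_cast
      field_simp
    rw [hang]
  have hvset : regularVertexSet (2*n) 0 ρ φ = {x : E2 | ∃ k : Fin (2*n), x = vtx ρ φ n ((k:ℕ):ℤ)} := by
    unfold regularVertexSet
    ext x
    simp only [Set.mem_range, Set.mem_setOf_eq]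
    constructor
    · rintro ⟨k, hk⟩
      exact ⟨k, by rw [← hk, hvfun]⟩
    · rintro ⟨k, hk⟩
      exact ⟨k, by rw [hk, ← hvfun]⟩
  -- choose vertex indices
  have hmem : ∀ i, u i ∈ {x : E2 | ∃ k : Fin (2*n), x = vtx ρ φ n ((k:ℕ):ℤ)} := by
    intro i
    rw [← hvset, ← hreg]
    exact ⟨i, Or.inl rfl⟩
  choose κ hκ using hmem
  set τ : Fin n → ℤ := fun i => ((κ i : ℕ) : ℤ) with hτ
  have hτb : ∀ i, 0 ≤ τ i ∧ τ i < 2*n := by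
    intro i
    constructor
    · positivity
    · have := (κ i).isLt
      simp only [hτ]
      omega
  have hu : ∀ i, u i = vtx ρ φ n (τ i) := hκ
  -- the representative in [0, n)
  set w : Fin n → Fin n := fun i => ⟨(τ i % (n:ℤ)).toNat, by
    have h1 : 0 ≤ τ i % (n:ℤ) := Int.emod_nonneg _ (ne_of_gt hnz)
    have h2 : τ i % (n:ℤ) < n := Int.emod_lt_of_pos _ hnz
    omega⟩ with hw
  have hwv : ∀ i, ((w i : ℕ) : ℤ) = τ i % n := by
    intro i
    simp only [hw]
    have h1 : 0 ≤ τ i % (n:ℤ) := Int.emod_nonneg _ (ne_of_gt hnz)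
    omega
  -- mod facts
  have hτmod : ∀ i, (τ i < n ∧ τ i % (n:ℤ) = τ i) ∨ ((n:ℤ) ≤ τ i ∧ τ i % (n:ℤ) = τ i - n) := by
    intro i
    rcases lt_or_ge (τ i) (n:ℤ) with h | h
    · exact Or.inl ⟨h, Int.emod_eq_of_lt (hτb i).1 h⟩
    · refine Or.inr ⟨h, ?_⟩
      have h2 := (hτb i).2
      rw [show τ i % (n:ℤ) = (τ i - n) % n from (Int.sub_emod_right _ _).symm]
      exact Int.emod_eq_of_lt (by omega) (by omega)
  have hbnd : ∀ (m d : ℤ), d = 2*(n:ℤ)*m → -(3*(n:ℤ)) < d → d < 2*(n:ℤ) → (d = 0 ∨ d = -2*(n:ℤ)) := by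
    intro m d hd h1 h2
    have hm1 : m ≤ 0 := by nlinarith
    have hm2 : -1 ≤ m := by nlinarith
    have : m = 0 ∨ m = -1 := by omega
    rcases this with rfl | rfl
    · left; rw [hd]; ring
    · right; rw [hd]; ring
  -- segments coincide with vertex segments
  have hseg : ∀ i, segment ℝ (-u i) (u i)
      = segment ℝ (-(vtx ρ φ n ((w i : ℕ):ℤ))) (vtx ρ φ n ((w i : ℕ):ℤ)) := by
    intro i
    rcases hτmod i with ⟨hlt, hmod⟩ | ⟨hge, hmod⟩
    · have heq : ((w i : ℕ) : ℤ) = τ i := by rw [hwv i, hmod]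
      rw [heq, ← hu]
    · have heq : ((w i : ℕ) : ℤ) = τ i - n := by rw [hwv i, hmod]
      have h5 : vtx ρ φ n (τ i) = - vtx ρ φ n (τ i - n) := by
        conv_lhs => rw [show τ i = (τ i - n) + n by ring]
        exact vtx_add_n ρ φ n hn _
      rw [hu i, heq, h5, neg_neg, segment_symm]
  -- surjectivity of w
  have hwsurj : Function.Surjective w := by
    intro j
    have hjmem : vtx ρ φ n ((j:ℕ):ℤ) ∈ {x : E2 | ∃ i, x = u i ∨ x = -u i} := by
      rw [hreg, hvset]
      refine ⟨⟨(j:ℕ), by omega⟩, rfl⟩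
    obtain ⟨i, hi | hi⟩ := hjmem
    · use i
      rw [hu i] at hi
      obtain ⟨m, hm⟩ := vtx_inj ρ φ n hρ hn _ _ hi
      have h2 := (hτb i).2
      have h0 := (hτb i).1
      have h3 : ((j:ℕ):ℤ) < n := by exact_mod_cast j.isLt
      have h4 : (0:ℤ) ≤ ((j:ℕ):ℤ) := by positivity
      have hd := hbnd m (((j:ℕ):ℤ) - τ i) hm (by omega) (by omega)
      apply Fin.ext
      have h1 := hwv i
      rcases hτmod i with ⟨hlt, hmod⟩ | ⟨hge, hmod⟩ <;> omega
    · use i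
      rw [hu i] at hi
      have hvv : vtx ρ φ n ((j:ℕ):ℤ) = vtx ρ φ n (τ i + n) := by
        rw [vtx_add_n ρ φ n hn, hi]
      obtain ⟨m, hm⟩ := vtx_inj ρ φ n hρ hn _ _ hvv
      have h2 := (hτb i).2
      have h0 := (hτb i).1
      have h3 : ((j:ℕ):ℤ) < n := by exact_mod_cast j.isLt
      have h4 : (0:ℤ) ≤ ((j:ℕ):ℤ) := by positivity
      have hd := hbnd m (((j:ℕ):ℤ) - (τ i + n)) hm (by omega) (by omega)
      apply Fin.ext
      have h1 := hwv i
      rcases hτmod i with ⟨hlt, hmod⟩ | ⟨hge, hmod⟩ <;> omega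
  have hwbij : Function.Bijective w := Finite.surjective_iff_bijective.1 hwsurj
  -- reindex the Minkowski sum
  have hZ : ∑ i, segment ℝ (-u i) (u i)
      = ∑ j : Fin n, segment ℝ (-(vtx ρ φ n ((j:ℕ):ℤ))) (vtx ρ φ n ((j:ℕ):ℤ)) := by
    rw [Finset.sum_congr rfl (fun i _ => hseg i)]
    exact Function.Bijective.sum_comp hwbij
      (fun j => segment ℝ (-(vtx ρ φ n ((j:ℕ):ℤ))) (vtx ρ φ n ((j:ℕ):ℤ)))
  -- right-hand side sum
  have hsum : ∑ i, circumradius (segment ℝ (-u i) (u i)) = n * ρ := by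
    have : ∀ i : Fin n, circumradius (segment ℝ (-u i) (u i)) = ρ := by
      intro i
      rw [circumradius_segment, hu i, norm_vtx ρ φ n hρ.le]
    rw [Finset.sum_congr rfl (fun i _ => this i), Finset.sum_const, Finset.card_univ,
      Fintype.card_fin, nsmul_eq_mul]
  -- circumradius of the zonotope
  set R : ℝ := ρ / Real.sin (π / (2*n)) with hR
  have hZcirc : circumradius (∑ i, segment ℝ (-u i) (u i)) = R := by
    rw [hZ]
    have hub : (∑ j : Fin n, segment ℝ (-(vtx ρ φ n ((j:ℕ):ℤ))) (vtx ρ φ n ((j:ℕ):ℤ)))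
        ⊆ closedBall (0:E2) R := by
      intro z hz
      rw [Set.mem_fintype_sum] at hz
      obtain ⟨g, hg, hgz⟩ := hz
      choose t ht hteq using fun j => (mem_segment_neg _ _).1 (hg j)
      have hz' : z = ∑ j : Fin n, t j • vtx ρ φ n ((j:ℕ):ℤ) := by
        rw [← hgz]; exact Finset.sum_congr rfl fun j _ => hteq j
      rw [mem_closedBall_zero_iff]
      by_cases h0 : z = 0
      · rw [h0, norm_zero]; positivity
      · have hr : 0 < ‖z‖ := norm_pos_iff.2 h0
        obtain ⟨ψ, hψ0, hψ1⟩ := polar z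
        have hinner : ∀ j : Fin n, ⟪vtx ρ φ n ((j:ℕ):ℤ), z⟫
            = ρ * ‖z‖ * Real.cos ((φ - ψ) + (j:ℕ) * (π/n)) := by
          intro j
          rw [PiLp.inner_apply, Fin.sum_univ_two]
          simp only [RCLike.inner_apply, conj_trivial]
          rw [vtx_apply0, vtx_apply1, hψ0, hψ1]
          rw [show (φ - ψ) + ((j:ℕ):ℝ) * (π/n) = (π * (((j:ℕ):ℤ):ℝ) / n + φ) - ψ by
            push_cast; ring]
          rw [Real.cos_sub]
          ring
        have h1 : ⟪z, z⟫ = ∑ j : Fin n, t j * ⟪vtx ρ φ n ((j:ℕ):ℤ), z⟫ := by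
          nth_rewrite 1 [hz']
          rw [sum_inner]
          exact Finset.sum_congr rfl fun j _ => real_inner_smul_left _ _ _
        have h2 : ∑ j : Fin n, t j * ⟪vtx ρ φ n ((j:ℕ):ℤ), z⟫
            ≤ ∑ j : Fin n, ρ * ‖z‖ * |Real.cos ((φ - ψ) + (j:ℕ) * (π/n))| := by
          apply Finset.sum_le_sum
          intro j _
          rw [hinner j]
          have hx1 : t j * (ρ * ‖z‖ * Real.cos ((φ - ψ) + (j:ℕ) * (π/n)))
              ≤ |t j| * (ρ * ‖z‖ * |Real.cos ((φ - ψ) + (j:ℕ) * (π/n))|) := by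
            calc t j * (ρ * ‖z‖ * Real.cos ((φ - ψ) + (j:ℕ) * (π/n)))
                ≤ |t j * (ρ * ‖z‖ * Real.cos ((φ - ψ) + (j:ℕ) * (π/n)))| := le_abs_self _
              _ = |t j| * (ρ * ‖z‖ * |Real.cos ((φ - ψ) + (j:ℕ) * (π/n))|) := by
                  rw [abs_mul, abs_mul, abs_mul, abs_of_nonneg hρ.le, abs_of_nonneg (norm_nonneg z)]
          have hx2 : |t j| * (ρ * ‖z‖ * |Real.cos ((φ - ψ) + (j:ℕ) * (π/n))|)
              ≤ 1 * (ρ * ‖z‖ * |Real.cos ((φ - ψ) + (j:ℕ) * (π/n))|) :=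
            mul_le_mul_of_nonneg_right (ht j) (by positivity)
          rw [one_mul] at hx2
          linarith
        have h3 : ∑ j : Fin n, ρ * ‖z‖ * |Real.cos ((φ - ψ) + (j:ℕ) * (π/n))|
            ≤ ρ * ‖z‖ * (1 / Real.sin (π/(2*n))) := by
          rw [show (∑ j : Fin n, ρ * ‖z‖ * |Real.cos ((φ - ψ) + (j:ℕ) * (π/n))|)
              = ρ * ‖z‖ * ∑ k ∈ Finset.range n, |Real.cos ((φ - ψ) + k * (π/n))| by
            rw [Finset.mul_sum, ← Fin.sum_univ_eq_sum_range
              (fun k : ℕ => ρ * ‖z‖ * |Real.cos ((φ - ψ) + k * (π/n))|) n]]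
          exact mul_le_mul_of_nonneg_left (abs_cos_sum_le n hn (φ - ψ)) (by positivity)
        have h4 : ⟪z, z⟫ = ‖z‖^2 := real_inner_self_eq_norm_sq z
        have h5 : ‖z‖^2 ≤ R * ‖z‖ := by
          have he : ρ * ‖z‖ * (1 / Real.sin (π/(2*n))) = R * ‖z‖ := by
            rw [hR]; field_simp
          rw [← h4, h1]
          linarith
        nlinarith [h5, hr]
    apply circumradius_eq _ R (by positivity) hub (∑ j : Fin n, vtx ρ φ n ((j:ℕ):ℤ))
      (Set.finset_sum_mem_finset_sum _ _ _ (fun j _ => right_mem_segment ℝ _ _)) ?_ ?_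
    · rw [show -(∑ j : Fin n, vtx ρ φ n ((j:ℕ):ℤ)) = ∑ j : Fin n, -(vtx ρ φ n ((j:ℕ):ℤ)) from
        by rw [Finset.sum_neg_distrib]]
      exact Set.finset_sum_mem_finset_sum _ _ _ (fun j _ => left_mem_segment ℝ _ _)
    · -- norm of the extreme point
      set p : E2 := ∑ j : Fin n, vtx ρ φ n ((j:ℕ):ℤ) with hp
      have happly : ∀ i : Fin 2, p i = ∑ j : Fin n, vtx ρ φ n ((j:ℕ):ℤ) i := by
        intro i
        rw [hp]
        rw [WithLp.ofLp_sum]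
        exact Finset.sum_apply i Finset.univ _
      have hang : ∀ j : Fin n, π * (((j:ℕ):ℤ):ℝ) / n + φ = φ + ((j:ℕ):ℝ) * (π/n) := by
        intro j; push_cast; field_simp; ring
      have hp0 : p 0 = ρ * ∑ k ∈ Finset.range n, Real.cos (φ + k * (π/n)) := by
        rw [happly 0]
        simp_rw [vtx_apply0, hang]
        rw [Finset.mul_sum, ← Fin.sum_univ_eq_sum_range
          (fun k : ℕ => ρ * Real.cos (φ + k * (π/n))) n]
      have hp1 : p 1 = ρ * ∑ k ∈ Finset.range n, Real.sin (φ + k * (π/n)) := by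
        rw [happly 1]
        simp_rw [vtx_apply1, hang]
        rw [Finset.mul_sum, ← Fin.sum_univ_eq_sum_range
          (fun k : ℕ => ρ * Real.sin (φ + k * (π/n))) n]
      have hc := tel_cos n hn φ
      have hsn := tel_sin n hn φ
      rw [show φ + π - π/(2*n) = (φ - π/(2*n)) + π by ring] at hc hsn
      rw [Real.sin_add_pi] at hc
      rw [Real.cos_add_pi] at hsn
      have hC : ∑ k ∈ Finset.range n, Real.cos (φ + k * (π/n))
          = -Real.sin (φ - π/(2*n)) / Real.sin (π/(2*n)) := by
        rw [eq_div_iff (ne_of_gt hs)]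
        linarith [hc]
      have hS : ∑ k ∈ Finset.range n, Real.sin (φ + k * (π/n))
          = Real.cos (φ - π/(2*n)) / Real.sin (π/(2*n)) := by
        rw [eq_div_iff (ne_of_gt hs)]
        linarith [hsn]
      have hpyth := Real.sin_sq_add_cos_sq (φ - π/(2*n))
      have hsq : (∑ k ∈ Finset.range n, Real.cos (φ + k * (π/n)))^2
          + (∑ k ∈ Finset.range n, Real.sin (φ + k * (π/n)))^2
          = 1 / (Real.sin (π/(2*n)))^2 := by
        rw [hC, hS]
        field_simp
        exact Real.sin_sq_add_cos_sq _

      rw [EuclideanSpace.norm_eq]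
      have hsum2 : ∑ i : Fin 2, ‖p i‖^2 = (ρ / Real.sin (π/(2*n)))^2 := by
        rw [Fin.sum_univ_two, hp0, hp1]
        simp only [Real.norm_eq_abs, sq_abs]
        rw [mul_pow, mul_pow, ← mul_add, hsq, div_pow]
        field_simp
      rw [hsum2, Real.sqrt_sq (by positivity), hR]
  rw [hZcirc, hsum, hR]
  field_simp
end
end

section
/- For integers d ≥ 2 and n ≥ k ≥ 1, c(d,n,k) ≤ c(2,n,n) = 1/sin(π/(2n)); that is, there exists a configuration of n unit vectors in ℝ^d for which every signed k-subset sum has norm at most 1/sin(π/(2n)). -/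
open Real Metric Set Pointwise

open scoped Classical

noncomputable section

/-- The circumradius of a subset of `d`-dimensional Euclidean space. -/
def circumrad (d : ℕ) (K : Set (EuclideanSpace ℝ (Fin d))) : ℝ :=
  sInf {ρ : ℝ | 0 ≤ ρ ∧ ∃ t : EuclideanSpace ℝ (Fin d), K ⊆ closedBall t ρ}

/-- κ_d : the volume of the Euclidean unit ball in dimension `d`. -/
def unitBallVol (d : ℕ) : ℝ :=
  (MeasureTheory.volume (closedBall (0 : EuclideanSpace ℝ (Fin d)) 1)).toReal

/-- The set of norms of all signed sums of `k` of the vectors `u` in `ℝ^d`. -/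
def signedSubsetSumsD (d n k : ℕ) (u : Fin n → EuclideanSpace ℝ (Fin d)) : Set ℝ :=
  {x : ℝ | ∃ (s : Finset (Fin n)) (ε : Fin n → ℝ), s.card = k ∧
    (∀ i, ε i = 1 ∨ ε i = -1) ∧ x = ‖∑ i ∈ s, ε i • u i‖}

/-- `c(d,n,k)`. -/
def cdnk (d n k : ℕ) : ℝ :=
  sInf {M : ℝ | ∃ u : Fin n → EuclideanSpace ℝ (Fin d),
    (∀ i, ‖u i‖ = 1) ∧ IsGreatest (signedSubsetSumsD d n k u) M}




lemma tele_cos (n : ℕ) (ψ : ℝ) (k : ℕ) :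
    ∑ i ∈ Finset.range k, (2 * Real.sin (π/(2*n)) * Real.cos (i * (π/n) - ψ))
    = Real.sin (k * (π/n) - ψ - π/(2*n)) + Real.sin (ψ + π/(2*n)) := by
  have h := Finset.sum_range_sub (fun i : ℕ => Real.sin (i * (π/n) - ψ - π/(2*n))) k
  push_cast at h
  have h0 : Real.sin ((0:ℝ) * (π/n) - ψ - π/(2*n)) = - Real.sin (ψ + π/(2*n)) := by
    rw [show (0:ℝ) * (π/n) - ψ - π/(2*n) = -(ψ + π/(2*n)) by ring, Real.sin_neg]
  rw [h0] at h
  rw [sub_neg_eq_add] at h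
  rw [← h]
  apply Finset.sum_congr rfl
  intro i _
  rw [Real.sin_sub_sin]
  have h2 : (((i:ℝ)+1) * (π/n) - ψ - π/(2*n) - ((i:ℝ) * (π/n) - ψ - π/(2*n)))/2 = π/(2*n) := by
    ring
  have h4 : ((((i:ℝ)+1) * (π/n) - ψ - π/(2*n)) + ((i:ℝ) * (π/n) - ψ - π/(2*n)))/2
      = (i:ℝ) * (π/n) - ψ := by ring
  rw [h2, h4]

lemma tele_sin (n : ℕ) (k : ℕ) :
    ∑ i ∈ Finset.range k, (2 * Real.sin (π/(2*n)) * Real.sin (i * (π/n)))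
    = - Real.cos (k * (π/n) - π/(2*n)) + Real.cos (π/(2*n)) := by
  have h := Finset.sum_range_sub (fun i : ℕ => - Real.cos (i * (π/n) - π/(2*n))) k
  push_cast at h
  have h0 : ((0:ℝ) * (π/n) - π/(2*n)) = -(π/(2*n)) := by ring
  rw [h0, Real.cos_neg] at h
  rw [sub_neg_eq_add] at h
  rw [← h]
  apply Finset.sum_congr rfl
  intro i _
  rw [show -Real.cos (((i:ℝ)+1) * (π/n) - π/(2*n)) - -Real.cos ((i:ℝ) * (π/n) - π/(2*n))
      = Real.cos ((i:ℝ) * (π/n) - π/(2*n)) - Real.cos (((i:ℝ)+1) * (π/n) - π/(2*n)) by ring]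
  rw [Real.cos_sub_cos]
  have h2 : (((i:ℝ)) * (π/n) - π/(2*n) - (((i:ℝ)+1) * (π/n) - π/(2*n)))/2 = -(π/(2*n)) := by
    ring
  have h4 : ((((i:ℝ)) * (π/n) - π/(2*n)) + (((i:ℝ)+1) * (π/n) - π/(2*n)))/2
      = (i:ℝ) * (π/n) := by ring
  rw [h2, h4, Real.sin_neg]
  ring

lemma sin_alpha_pos {n : ℕ} (hn : 1 ≤ n) : 0 < Real.sin (π/(2*n)) := by
  have hnR : (1:ℝ) ≤ n := by exact_mod_cast hn
  apply Real.sin_pos_of_pos_of_lt_pi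
  · positivity
  · rw [div_lt_iff₀ (by linarith)]
    nlinarith [pi_pos]



lemma core_bound {n : ℕ} (hn : 1 ≤ n) (ψ : ℝ) :
    ∑ i ∈ Finset.range n, |Real.cos (i * (π/n) - ψ)| ≤ 1 / Real.sin (π/(2*n)) := by
  have hnR : (1:ℝ) ≤ n := by exact_mod_cast hn
  have hn0 : (0:ℝ) < n := by linarith
  set α := (π/(2*n) : ℝ) with hαdef
  set β := (π/(n:ℝ) : ℝ) with hβdef
  have hβα : β = 2*α := by rw [hαdef, hβdef]; field_simp
  have hβpos : 0 < β := by rw [hβdef]; positivity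
  have hαpos : 0 < α := by rw [hαdef]; positivity
  have hα2 : α ≤ π/2 := by
    rw [hαdef, div_le_div_iff₀ (by linarith) (by norm_num)]
    nlinarith [pi_pos]
  have hαπ : α < π := by linarith [pi_pos]
  have hsin : 0 < Real.sin α := Real.sin_pos_of_pos_of_lt_pi hαpos hαπ
  have hnβ : (n:ℝ) * β = π := by rw [hβdef]; field_simp
  set B : ℝ → ℝ := fun x => ∑ i ∈ Finset.range n, |Real.cos (i * β - x)| with hBdef
  have hper : Function.Periodic B β := by
    intro x
    rcases Nat.exists_eq_add_of_le hn with ⟨m, hm⟩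
    have hmn : n = m + 1 := by omega
    simp only [hBdef]
    rw [hmn, Finset.sum_range_succ', Finset.sum_range_succ]
    have e1 : ∀ i : ℕ, ((i:ℝ)+1) * β - (x + β) = i * β - x := by intro i; ring
    have e2 : Real.cos ((0:ℕ) * β - (x + β)) = Real.cos (x + β) := by
      rw [show ((0:ℕ):ℝ) * β - (x + β) = -(x+β) by push_cast; ring, Real.cos_neg]
    have e3 : Real.cos ((m:ℝ) * β - x) = - Real.cos (x + β) := by
      have : (m:ℝ) * β - x = π - (x + β) := by
        have : (m:ℝ) * β = π - β := by
          have : ((m:ℝ)+1) * β = π := by rw [← hnβ, hmn]; push_cast; ring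
          linarith
        rw [this]; ring
      rw [this, Real.cos_pi_sub]
    congr 1
    · apply Finset.sum_congr rfl
      intro i _
      congr 2
      push_cast
      exact e1 i
    · rw [e2, e3, abs_neg]
  -- key on the fundamental window
  have key : ∀ x, x ∈ Set.Ico (-α) α → B x ≤ 1 / Real.sin α := by
    intro x hx
    obtain ⟨hx1, hx2⟩ := hx
    have h0x : 0 ≤ π/2 + x := by linarith
    have h0x' : 0 ≤ (π/2 + x)/β := by positivity
    set m : ℕ := ⌊(π/2 + x)/β⌋₊ + 1 with hmdef
    have hfl : ∀ i : ℕ, i < m ↔ (i:ℝ) * β ≤ π/2 + x := by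
      intro i
      rw [hmdef, Nat.lt_succ_iff, Nat.le_floor_iff h0x', le_div_iff₀ hβpos]
    have hmn : m ≤ n := by
      rw [hmdef, Nat.succ_le_iff]
      rw [Nat.floor_lt h0x', div_lt_iff₀ hβpos, hnβ]
      linarith
    have hposs : ∀ i ∈ Finset.range m, |Real.cos (i * β - x)| = Real.cos (i * β - x) := by
      intro i hi
      rw [Finset.mem_range] at hi
      apply abs_of_nonneg
      apply Real.cos_nonneg_of_mem_Icc
      constructor
      · have : (0:ℝ) ≤ (i:ℝ) * β := by positivity
        linarith
      · have := (hfl i).1 hi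
        linarith
    have hnegs : ∀ i ∈ Finset.Ico m n, |Real.cos (i * β - x)| = - Real.cos (i * β - x) := by
      intro i hi
      rw [Finset.mem_Ico] at hi
      apply abs_of_nonpos
      apply Real.cos_nonpos_of_pi_div_two_le_of_le
      · have : ¬ ((i:ℝ) * β ≤ π/2 + x) := by
          rw [← hfl i]; omega
        linarith [not_le.1 this]
      · have hi1 : (i:ℝ) ≤ (n:ℝ) - 1 := by
          have : (i:ℝ) + 1 ≤ (n:ℝ) := by exact_mod_cast hi.2
          linarith
        have : (i:ℝ) * β ≤ ((n:ℝ) - 1) * β := by nlinarith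
        nlinarith [pi_pos]
    have eq1 : B x = (∑ i ∈ Finset.range m, |Real.cos (i * β - x)|)
        + (∑ i ∈ Finset.Ico m n, |Real.cos (i * β - x)|) := by
      simp only [hBdef]
      rw [Finset.range_eq_Ico, ← Finset.sum_Ico_consecutive _ (Nat.zero_le m) hmn,
        ← Finset.range_eq_Ico]
    have eq2 := Finset.sum_congr rfl hposs
    have eq3 : (∑ i ∈ Finset.Ico m n, |Real.cos (i * β - x)|)
        = - ∑ i ∈ Finset.Ico m n, Real.cos (i * β - x) := by
      rw [Finset.sum_congr rfl hnegs, Finset.sum_neg_distrib]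
    have eq4 : (∑ i ∈ Finset.range m, Real.cos (i * β - x))
        + (∑ i ∈ Finset.Ico m n, Real.cos (i * β - x))
        = ∑ i ∈ Finset.range n, Real.cos (i * β - x) := by
      rw [Finset.range_eq_Ico, Finset.sum_Ico_consecutive _ (Nat.zero_le m) hmn,
        ← Finset.range_eq_Ico]
    have tm := tele_cos n x m
    have tn := tele_cos n x n
    rw [← hαdef, ← hβdef] at tm tn
    have hFn : Real.sin ((n:ℝ) * β - x - α) = Real.sin (x + α) := by
      rw [show (n:ℝ) * β - x - α = π - (x + α) by rw [hnβ]; ring, Real.sin_pi_sub]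
    rw [hFn] at tn
    have hfac : ∀ k : ℕ, (∑ i ∈ Finset.range k, (2 * Real.sin α * Real.cos (i * β - x)))
        = 2 * Real.sin α * ∑ i ∈ Finset.range k, Real.cos (i * β - x) := by
      intro k; rw [Finset.mul_sum]
    rw [hfac] at tm tn
    have hs1 : Real.sin ((m:ℝ) * β - x - α) ≤ 1 := Real.sin_le_one _
    rw [le_div_iff₀ hsin]
    nlinarith [hsin]
  -- reduce general ψ
  set mz : ℤ := ⌊(ψ + α)/β⌋ with hmz
  have hmem : ψ - mz * β ∈ Set.Ico (-α) α := by
    have h1 : (mz:ℝ) ≤ (ψ + α)/β := Int.floor_le _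
    have h2 : (ψ + α)/β < mz + 1 := Int.lt_floor_add_one _
    rw [le_div_iff₀ hβpos] at h1
    rw [div_lt_iff₀ hβpos] at h2
    constructor
    · nlinarith
    · nlinarith
  have hred := hper.sub_int_mul_eq (x := ψ) mz
  show B ψ ≤ 1 / Real.sin α
  calc B ψ = B (ψ - mz * β) := hred.symm
    _ ≤ 1 / Real.sin α := key _ hmem






lemma planar_bound {n : ℕ} (hn : 1 ≤ n) (s : Finset (Fin n)) (ε : Fin n → ℝ)
    (hε : ∀ i, ε i = 1 ∨ ε i = -1) :
    Real.sqrt ((∑ i ∈ s, ε i * Real.cos (i * (π/n)))^2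
      + (∑ i ∈ s, ε i * Real.sin (i * (π/n)))^2) ≤ 1 / Real.sin (π/(2*n)) := by
  have hsin := sin_alpha_pos hn
  set X := ∑ i ∈ s, ε i * Real.cos (i * (π/n)) with hXdef
  set Y := ∑ i ∈ s, ε i * Real.sin (i * (π/n)) with hYdef
  set N := Real.sqrt (X^2 + Y^2) with hNdef
  have hN0 : 0 ≤ N := Real.sqrt_nonneg _
  rcases eq_or_lt_of_le hN0 with h|h
  · rw [← h]; positivity
  · set z : ℂ := X + Y * Complex.I with hzdef
    have habs : ‖z‖ = N := by
      rw [Complex.norm_def, hzdef, Complex.normSq_add_mul_I]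
    have hz0 : z ≠ 0 := by
      intro hz
      rw [hz, norm_zero] at habs
      exact absurd habs.symm (ne_of_gt h)
    set ψ := z.arg with hψdef
    have hre : z.re = X := by simp [hzdef]
    have him : z.im = Y := by simp [hzdef]
    have hcos : Real.cos ψ = X / N := by rw [hψdef, Complex.cos_arg hz0, hre, habs]
    have hsinψ : Real.sin ψ = Y / N := by rw [hψdef, Complex.sin_arg, him, habs]
    have hNsq : N^2 = X^2 + Y^2 := Real.sq_sqrt (by positivity)
    have key : ∀ i : Fin n, Real.cos ((i:ℕ) * (π/n)) * X + Real.sin ((i:ℕ) * (π/n)) * Y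
        = N * Real.cos ((i:ℕ) * (π/n) - ψ) := by
      intro i
      rw [Real.cos_sub, hcos, hsinψ]
      field_simp
    have expand : X^2 + Y^2
        = ∑ i ∈ s, ε i * (Real.cos ((i:ℕ) * (π/n)) * X + Real.sin ((i:ℕ) * (π/n)) * Y) := by
      have h2 : ∑ i ∈ s, ε i * (Real.cos ((i:ℕ) * (π/n)) * X + Real.sin ((i:ℕ) * (π/n)) * Y)
          = (∑ i ∈ s, ε i * Real.cos ((i:ℕ) * (π/n))) * X
            + (∑ i ∈ s, ε i * Real.sin ((i:ℕ) * (π/n))) * Y := by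
        rw [Finset.sum_mul, Finset.sum_mul, ← Finset.sum_add_distrib]
        apply Finset.sum_congr rfl
        intro i _
        ring
      rw [h2, ← hXdef, ← hYdef]
      ring
    have step1 : X^2 + Y^2
        ≤ ∑ i ∈ s, |Real.cos ((i:ℕ) * (π/n)) * X + Real.sin ((i:ℕ) * (π/n)) * Y| := by
      rw [expand]
      apply Finset.sum_le_sum
      intro i _
      rcases hε i with h1|h1 <;> rw [h1]
      · rw [one_mul]; exact le_abs_self _
      · rw [neg_one_mul]; exact neg_le_abs _
    have step2 : ∑ i ∈ s, |Real.cos ((i:ℕ) * (π/n)) * X + Real.sin ((i:ℕ) * (π/n)) * Y|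
        ≤ ∑ i : Fin n, |Real.cos ((i:ℕ) * (π/n)) * X + Real.sin ((i:ℕ) * (π/n)) * Y| :=
      Finset.sum_le_sum_of_subset_of_nonneg (Finset.subset_univ s)
        (fun i _ _ => abs_nonneg _)
    have step3 : ∑ i : Fin n, |Real.cos ((i:ℕ) * (π/n)) * X + Real.sin ((i:ℕ) * (π/n)) * Y|
        ≤ N * (1 / Real.sin (π/(2*n))) := by
      have : ∀ i : Fin n, |Real.cos ((i:ℕ) * (π/n)) * X + Real.sin ((i:ℕ) * (π/n)) * Y|
          = N * |Real.cos ((i:ℕ) * (π/n) - ψ)| := by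
        intro i
        rw [key i, abs_mul, abs_of_pos h]
      rw [Finset.sum_congr rfl (fun i _ => this i), ← Finset.mul_sum]
      apply mul_le_mul_of_nonneg_left _ hN0
      rw [Fin.sum_univ_eq_sum_range (fun i => |Real.cos ((i:ℕ) * (π/n) - ψ)|) n]
      exact core_bound hn ψ
    have : N * N ≤ N * (1 / Real.sin (π/(2*n))) := by
      calc N * N = X^2 + Y^2 := by rw [← hNsq]; ring
        _ ≤ _ := le_trans step1 (le_trans step2 step3)
    exact le_of_mul_le_mul_left this h







lemma sum_cos_reg {n : ℕ} (hn : 1 ≤ n) :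
    ∑ i ∈ Finset.range n, Real.cos (i * (π/n)) = 1 := by
  have hsin := sin_alpha_pos hn
  have hnR : (1:ℝ) ≤ n := by exact_mod_cast hn
  have h := tele_cos n 0 n
  have hrw : ∀ i : ℕ, (i:ℝ) * (π/n) - 0 = (i:ℝ) * (π/n) := fun i => by ring
  simp only [hrw, zero_add] at h
  have h2 : Real.sin ((n:ℝ) * (π/n) - π/(2*n)) = Real.sin (π/(2*n)) := by
    rw [show (n:ℝ) * (π/n) - π/(2*n) = π - π/(2*n) by field_simp, Real.sin_pi_sub]
  rw [h2] at h
  rw [← Finset.mul_sum] at h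
  have h3 : 2 * Real.sin (π/(2*n)) * (∑ i ∈ Finset.range n, Real.cos (i * (π/n)))
      = 2 * Real.sin (π/(2*n)) * 1 := by linarith
  exact mul_left_cancel₀ (by positivity) h3

lemma sum_sin_reg {n : ℕ} (hn : 1 ≤ n) :
    ∑ i ∈ Finset.range n, Real.sin (i * (π/n))
      = Real.cos (π/(2*n)) / Real.sin (π/(2*n)) := by
  have hsin := sin_alpha_pos hn
  have hnR : (1:ℝ) ≤ n := by exact_mod_cast hn
  have h := tele_sin n n
  have h2 : Real.cos ((n:ℝ) * (π/n) - π/(2*n)) = - Real.cos (π/(2*n)) := by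
    rw [show (n:ℝ) * (π/n) - π/(2*n) = π - π/(2*n) by field_simp, Real.cos_pi_sub]
  rw [h2, ← Finset.mul_sum] at h
  rw [eq_div_iff (ne_of_gt hsin)]
  nlinarith [h]



noncomputable def regVec (d n : ℕ) : Fin n → EuclideanSpace ℝ (Fin d) :=
  fun i => WithLp.toLp 2 (fun j : Fin d => if (j:ℕ) = 0 then Real.cos (i * (π/n)) else if (j:ℕ) = 1 then Real.sin (i * (π/n)) else 0)

lemma norm_coords {d : ℕ} (hd : 2 ≤ d) (X Y : ℝ) (x : EuclideanSpace ℝ (Fin d))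
    (hx : ∀ j : Fin d, x j = if (j:ℕ) = 0 then X else if (j:ℕ) = 1 then Y else 0) :
    ‖x‖ = Real.sqrt (X^2 + Y^2) := by
  rw [EuclideanSpace.norm_eq]
  congr 1
  have h0 : (0:ℕ) < d := by omega
  have h1 : (1:ℕ) < d := by omega
  set j0 : Fin d := ⟨0, h0⟩ with hj0
  set j1 : Fin d := ⟨1, h1⟩ with hj1
  have hne : j0 ≠ j1 := by
    intro hc
    have := congrArg Fin.val hc
    simp [hj0, hj1] at this
  have hvan : ∀ j ∈ (Finset.univ : Finset (Fin d)), j ∉ ({j0, j1} : Finset (Fin d)) → ‖x j‖^2 = 0 := by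
    intro j _ hj
    simp only [Finset.mem_insert, Finset.mem_singleton] at hj
    push_neg at hj
    have hv0 : (j:ℕ) ≠ 0 := by
      intro hc; exact hj.1 (Fin.ext hc)
    have hv1 : (j:ℕ) ≠ 1 := by
      intro hc; exact hj.2 (Fin.ext hc)
    rw [hx j, if_neg hv0, if_neg hv1]
    simp
  rw [← Finset.sum_subset (Finset.subset_univ ({j0, j1} : Finset (Fin d))) hvan]
  rw [Finset.sum_insert (by simp [hne]), Finset.sum_singleton]
  have hx0 : x j0 = X := by rw [hx j0]; simp [hj0]
  have hx1 : x j1 = Y := by rw [hx j1]; simp [hj1]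
  rw [hx0, hx1, Real.norm_eq_abs, Real.norm_eq_abs, sq_abs, sq_abs]

lemma regVec_coords {d n : ℕ} (s : Finset (Fin n)) (ε : Fin n → ℝ) (j : Fin d) :
    (∑ i ∈ s, ε i • regVec d n i) j
    = if (j:ℕ) = 0 then ∑ i ∈ s, ε i * Real.cos (i * (π/n))
      else if (j:ℕ) = 1 then ∑ i ∈ s, ε i * Real.sin (i * (π/n)) else 0 := by
  have happ : (∑ i ∈ s, ε i • regVec d n i) j = ∑ i ∈ s, ε i * (regVec d n i j) := by
    rw [WithLp.ofLp_sum, Finset.sum_apply]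
    rfl
  rw [happ]
  simp only [regVec]
  split_ifs with h1 h2
  · rfl
  · rfl
  · simp only [if_neg h1, if_neg h2, mul_zero, Finset.sum_const_zero]

lemma regVec_norm {d n : ℕ} (hd : 2 ≤ d) (i : Fin n) : ‖regVec d n i‖ = 1 := by
  rw [norm_coords hd (Real.cos (i * (π/n))) (Real.sin (i * (π/n))) (regVec d n i) (fun j => rfl)]
  rw [show Real.cos (i * (π/n))^2 + Real.sin (i * (π/n))^2 = 1 by
    rw [← Real.sin_sq_add_cos_sq (i * (π/n))]; ring]
  exact Real.sqrt_one

lemma regVec_sum_norm {d n : ℕ} (hd : 2 ≤ d) (s : Finset (Fin n)) (ε : Fin n → ℝ) :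
    ‖∑ i ∈ s, ε i • regVec d n i‖
    = Real.sqrt ((∑ i ∈ s, ε i * Real.cos (i * (π/n)))^2
        + (∑ i ∈ s, ε i * Real.sin (i * (π/n)))^2) :=
  norm_coords hd _ _ _ (regVec_coords s ε)



noncomputable def mk2 (a b : ℝ) : EuclideanSpace ℝ (Fin 2) :=
  WithLp.toLp 2 (fun j : Fin 2 => if (j:ℕ) = 0 then a else b)

lemma mk2_inner (a b c d : ℝ) : (inner ℝ (mk2 a b) (mk2 c d) : ℝ) = a * c + b * d := by
  rw [PiLp.inner_apply, Fin.sum_univ_two]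
  simp [mk2, RCLike.inner_apply]
  ring

lemma mk2_inner_vw (θ φ : ℝ) :
    (inner ℝ (mk2 (Real.cos θ) (Real.sin θ)) (mk2 (Real.sin φ) (-Real.cos φ)) : ℝ)
      = Real.sin (φ - θ) := by
  rw [mk2_inner, Real.sin_sub]
  ring

lemma mk2_norm (a b : ℝ) : ‖mk2 a b‖ = Real.sqrt (a^2 + b^2) := by
  rw [EuclideanSpace.norm_eq, Fin.sum_univ_two]
  simp [mk2]

lemma mk2_sub (a b c d : ℝ) : mk2 a b - mk2 c d = mk2 (a-c) (b-d) := by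
  ext j
  fin_cases j <;> simp [mk2]



lemma telescope_id (E : ℕ → ℝ) (n : ℕ) (hE : Monotone E) (hEn : E n = E 0 + π)
    (θ τ : ℝ) (hτ : τ = θ + π/2) (hwit : ∃ j, j < n ∧ E j = τ) (hlt : τ < E n) :
    ∑ j ∈ Finset.range n, (if E (j+1) ≤ τ then (1:ℝ) else -1)
      * (Real.sin (E (j+1) - θ) - Real.sin (E j - θ)) = 2 := by
  have hsinτ : Real.sin (τ - θ) = 1 := by
    rw [hτ, show θ + π/2 - θ = π/2 by ring, Real.sin_pi_div_two]
  have main : ∀ m, m ≤ n →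
      ∑ j ∈ Finset.range m, (if E (j+1) ≤ τ then (1:ℝ) else -1)
        * (Real.sin (E (j+1) - θ) - Real.sin (E j - θ))
      = if E m ≤ τ then Real.sin (E m - θ) - Real.sin (E 0 - θ)
        else 2 - Real.sin (E 0 - θ) - Real.sin (E m - θ) := by
    intro m
    induction m with
    | zero =>
      intro _
      obtain ⟨j, hj, hEj⟩ := hwit
      have hE0 : E 0 ≤ τ := hEj ▸ hE (Nat.zero_le j)
      rw [if_pos hE0]
      simp
    | succ m ih =>
      intro hm1
      have hm : m ≤ n := by omega
      rw [Finset.sum_range_succ, ih hm]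
      by_cases h1 : E (m+1) ≤ τ
      · have h0 : E m ≤ τ := le_trans (hE (by omega : m ≤ m+1)) h1
        rw [if_pos h1, if_pos h0, if_pos h1]
        ring
      · by_cases h0 : E m ≤ τ
        · have hEm : E m = τ := by
            obtain ⟨j, hj, hEj⟩ := hwit
            rcases le_or_gt j m with hjm | hjm
            · exact le_antisymm h0 (hEj ▸ hE hjm)
            · exact absurd (hEj ▸ hE (by omega : m + 1 ≤ j)) h1
          rw [if_pos h0, if_neg h1, if_neg h1, hEm, hsinτ]
          ring
        · rw [if_neg h0, if_neg h1, if_neg h1]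
          ring
  have hfin := main n (le_refl n)
  rw [if_neg (not_le.2 hlt)] at hfin
  rw [hfin, hEn, show E 0 + π - θ = (E 0 - θ) + π by ring, Real.sin_add_pi]
  ring

lemma unit_decomp (x : EuclideanSpace ℝ (Fin 2)) (hx : ‖x‖ = 1) :
    ∃ θ σ : ℝ, 0 ≤ θ ∧ θ < π ∧ (σ = 1 ∨ σ = -1) ∧
      x 0 = σ * Real.cos θ ∧ x 1 = σ * Real.sin θ := by
  have hx2 : (x 0)^2 + (x 1)^2 = 1 := by
    rw [EuclideanSpace.norm_eq, Fin.sum_univ_two, Real.norm_eq_abs, Real.norm_eq_abs,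
      sq_abs, sq_abs] at hx
    have h0 : (0:ℝ) ≤ (x 0)^2 + (x 1)^2 := by positivity
    calc (x 0)^2 + (x 1)^2 = Real.sqrt ((x 0)^2 + (x 1)^2) ^2 := (Real.sq_sqrt h0).symm
      _ = 1 := by rw [hx]; norm_num
  set z : ℂ := (x 0) + (x 1) * Complex.I with hzdef
  have habs : ‖z‖ = 1 := by
    rw [Complex.norm_def, hzdef, Complex.normSq_add_mul_I, hx2, Real.sqrt_one]
  have hz0 : z ≠ 0 := by
    intro hz
    rw [hz, norm_zero] at habs
    norm_num at habs
  have hre : z.re = x 0 := by simp [hzdef]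
  have him : z.im = x 1 := by simp [hzdef]
  have hcos : Real.cos z.arg = x 0 := by rw [Complex.cos_arg hz0, hre, habs, div_one]
  have hsin : Real.sin z.arg = x 1 := by rw [Complex.sin_arg, him, habs, div_one]
  have hφ1 : -π < z.arg := Complex.neg_pi_lt_arg z
  have hφ2 : z.arg ≤ π := Complex.arg_le_pi z
  by_cases hp : z.arg = π
  · refine ⟨0, -1, le_refl 0, Real.pi_pos, Or.inr rfl, ?_, ?_⟩
    · rw [Real.cos_zero, ← hcos, hp, Real.cos_pi]; ring
    · rw [Real.sin_zero, ← hsin, hp, Real.sin_pi]; ring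
  · by_cases hn0 : 0 ≤ z.arg
    · exact ⟨z.arg, 1, hn0, lt_of_le_of_ne hφ2 hp, Or.inl rfl,
        by rw [one_mul, hcos], by rw [one_mul, hsin]⟩
    · push_neg at hn0
      refine ⟨z.arg + π, -1, by linarith, by linarith, Or.inr rfl, ?_, ?_⟩
      · rw [Real.cos_add_pi, ← hcos]; ring
      · rw [Real.sin_add_pi, ← hsin]; ring



lemma w_dist (a b : ℝ) (h1 : b ≤ a) (h2 : a - b ≤ π) :
    ‖mk2 (Real.sin a) (-Real.cos a) - mk2 (Real.sin b) (-Real.cos b)‖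
      = 2 * Real.sin ((a - b)/2) := by
  rw [mk2_sub, mk2_norm]
  have hexp : (Real.sin a - Real.sin b)^2 + (-Real.cos a - -Real.cos b)^2
      = 2 - 2 * Real.cos (a - b) := by
    have ha := Real.sin_sq_add_cos_sq a
    have hb := Real.sin_sq_add_cos_sq b
    rw [Real.cos_sub]
    nlinarith
  rw [hexp]
  have hhalf := Real.abs_sin_half (a - b)
  have hnn : 0 ≤ Real.sin ((a-b)/2) := by
    apply Real.sin_nonneg_of_nonneg_of_le_pi
    · linarith
    · linarith [Real.pi_pos]
  rw [abs_of_nonneg hnn] at hhalf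
  rw [hhalf, show (2:ℝ) - 2*Real.cos (a-b) = 4 * ((1 - Real.cos (a-b))/2) by ring,
    show (4:ℝ) = 2^2 by norm_num, Real.sqrt_mul (by positivity), Real.sqrt_sq (by norm_num)]

lemma lower_bound {n : ℕ} (hn : 1 ≤ n) (u : Fin n → EuclideanSpace ℝ (Fin 2))
    (hu : ∀ i, ‖u i‖ = 1) (M : ℝ)
    (hM : ∀ ε : Fin n → ℝ, (∀ i, ε i = 1 ∨ ε i = -1) → ‖∑ i : Fin n, ε i • u i‖ ≤ M) :
    1 / Real.sin (π/(2*n)) ≤ M := by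
  have hsin := sin_alpha_pos hn
  have hnR : (1:ℝ) ≤ n := by exact_mod_cast hn
  have hn0 : 0 < n := hn
  choose θ σ hθ0 hθπ hσ hx0 hx1 using fun i => unit_decomp (u i) (hu i)
  have hσ2 : ∀ i, σ i * σ i = 1 := by
    intro i; rcases hσ i with h|h <;> rw [h] <;> norm_num
  set v : Fin n → EuclideanSpace ℝ (Fin 2) :=
    fun i => mk2 (Real.cos (θ i)) (Real.sin (θ i)) with hvdef
  have hvu : ∀ i, v i = σ i • u i := by
    intro i
    ext j
    have : (σ i • u i) j = σ i * u i j := rfl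
    rw [this]
    fin_cases j
    · show (if (0:ℕ) = 0 then Real.cos (θ i) else Real.sin (θ i)) = _
      rw [if_pos rfl]
      show Real.cos (θ i) = σ i * u i 0
      rw [hx0 i, ← mul_assoc, hσ2 i, one_mul]
    · show (if (((1:Fin 2)):ℕ) = 0 then Real.cos (θ i) else Real.sin (θ i)) = _
      rw [if_neg (by norm_num)]
      show Real.sin (θ i) = σ i * u i 1
      rw [hx1 i, ← mul_assoc, hσ2 i, one_mul]
  set τ : Fin n → ℝ := fun i => θ i + π/2 with hτdef
  have hτwin : ∀ i, π/2 ≤ τ i ∧ τ i < 3*π/2 := by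
    intro i
    constructor
    · have := hθ0 i; simp only [hτdef]; linarith
    · have := hθπ i; simp only [hτdef]; linarith
  set p := Tuple.sort τ with hpdef
  set g : Fin n → ℝ := τ ∘ p with hgdef
  have hg : Monotone g := Tuple.monotone_sort τ
  have hgwin : ∀ j, π/2 ≤ g j ∧ g j < 3*π/2 := fun j => hτwin (p j)
  set E : ℕ → ℝ := fun m => if h : m < n then g ⟨m, h⟩ else g ⟨0, hn0⟩ + π with hEdef
  have hElt : ∀ (m) (h : m < n), E m = g ⟨m, h⟩ := by
    intro m h; simp only [hEdef, dif_pos h]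
  have hEge : ∀ (m), n ≤ m → E m = g ⟨0, hn0⟩ + π := by
    intro m h; simp only [hEdef, dif_neg (by omega : ¬ m < n)]
  have hEmono : Monotone E := by
    intro a b hab
    by_cases ha : a < n
    · by_cases hb : b < n
      · rw [hElt a ha, hElt b hb]
        exact hg (by exact hab)
      · rw [hElt a ha, hEge b (by omega)]
        have h1 := (hgwin ⟨a, ha⟩).2
        have h2 := (hgwin ⟨0, hn0⟩).1
        linarith
    · rw [hEge a (by omega), hEge b (by omega)]
  have hEn : E n = E 0 + π := by
    rw [hEge n (le_refl n), hElt 0 hn0]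
  have hwit : ∀ i, ∃ j, j < n ∧ E j = τ i := by
    intro i
    refine ⟨(p.symm i).val, (p.symm i).isLt, ?_⟩
    rw [hElt _ (p.symm i).isLt]
    simp only [hgdef, Function.comp_apply, Fin.eta]
    rw [Equiv.apply_symm_apply]
  have hlt : ∀ i, τ i < E n := by
    intro i
    rw [hEge n (le_refl n)]
    calc τ i < 3*π/2 := (hτwin i).2
      _ = π/2 + π := by ring
      _ ≤ g ⟨0, hn0⟩ + π := add_le_add_left (hgwin ⟨0, hn0⟩).1 π
  set ε : ℕ → Fin n → ℝ := fun j i => if E (j+1) ≤ τ i then 1 else -1 with hεdef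
  have key1 : ∀ i : Fin n,
      ∑ j ∈ Finset.range n, ε j i * (Real.sin (E (j+1) - θ i) - Real.sin (E j - θ i)) = 2 :=
    fun i => telescope_id E n hEmono hEn (θ i) (τ i) rfl (hwit i) (hlt i)
  set w : ℝ → EuclideanSpace ℝ (Fin 2) := fun φ => mk2 (Real.sin φ) (-Real.cos φ) with hwdef
  set S : ℕ → EuclideanSpace ℝ (Fin 2) := fun j => ∑ i : Fin n, ε j i • v i with hSdef
  have key2 : ∀ j : ℕ, (inner ℝ (S j) (w (E (j+1)) - w (E j)) : ℝ)
      = ∑ i : Fin n, ε j i * (Real.sin (E (j+1) - θ i) - Real.sin (E j - θ i)) := by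
    intro j
    simp only [hSdef]
    rw [sum_inner]
    apply Finset.sum_congr rfl
    intro i _
    rw [real_inner_smul_left, inner_sub_right]
    simp only [hvdef, hwdef]
    rw [mk2_inner_vw, mk2_inner_vw]
  have key3 : ∑ j ∈ Finset.range n, (inner ℝ (S j) (w (E (j+1)) - w (E j)) : ℝ) = 2 * n := by
    rw [Finset.sum_congr rfl (fun j _ => key2 j), Finset.sum_comm,
      Finset.sum_congr rfl (fun i _ => key1 i)]
    simp
    ring
  have hM0 : 0 ≤ M := le_trans (norm_nonneg _) (hM (fun _ => 1) (fun _ => Or.inl rfl))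
  have hSM : ∀ j, ‖S j‖ ≤ M := by
    intro j
    have : S j = ∑ i : Fin n, (ε j i * σ i) • u i := by
      simp only [hSdef]
      apply Finset.sum_congr rfl
      intro i _
      rw [hvu i, smul_smul]
    rw [this]
    apply hM
    intro i
    rcases hσ i with h|h <;> by_cases h2 : E (j+1) ≤ τ i <;>
      simp only [hεdef, if_pos, if_neg, h, h2] <;> simp [h2, h]
  have hxj : ∀ j : ℕ, j < n → 0 ≤ E (j+1) - E j ∧ E (j+1) - E j ≤ π := by
    intro j hj
    constructor
    · have := hEmono (by omega : j ≤ j+1); linarith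
    · have h1 : E (j+1) ≤ E n := hEmono (by omega)
      have h2 : E 0 ≤ E j := hEmono (by omega)
      rw [hEn] at h1
      linarith
  have keybound : ∀ j : ℕ, j < n → (inner ℝ (S j) (w (E (j+1)) - w (E j)) : ℝ)
      ≤ M * (2 * Real.sin ((E (j+1) - E j)/2)) := by
    intro j hj
    calc (inner ℝ (S j) (w (E (j+1)) - w (E j)) : ℝ)
        ≤ ‖S j‖ * ‖w (E (j+1)) - w (E j)‖ := real_inner_le_norm _ _
      _ ≤ M * (2 * Real.sin ((E (j+1) - E j)/2)) := by
          have hd := w_dist (E (j+1)) (E j) (by linarith [(hxj j hj).1]) (hxj j hj).2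
          simp only [hwdef]
          rw [hd]
          apply mul_le_mul (hSM j) (le_refl _) ?_ hM0
          apply mul_nonneg (by norm_num)
          apply Real.sin_nonneg_of_nonneg_of_le_pi
          · linarith [(hxj j hj).1]
          · linarith [(hxj j hj).2, Real.pi_pos]
  -- Jensen
  have jensen : ∑ j ∈ Finset.range n, Real.sin ((E (j+1) - E j)/2)
      ≤ n * Real.sin (π/(2*n)) := by
    have hconc := strictConcaveOn_sin_Icc.concaveOn
    have hsum : ∑ j ∈ Finset.range n, (E (j+1) - E j) = π := by
      rw [Finset.sum_range_sub E n, hEn]; ring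
    have h := hconc.le_map_sum (t := Finset.range n) (w := fun _ => (n:ℝ)⁻¹)
      (p := fun j => (E (j+1) - E j)/2)
      (fun j _ => by positivity)
      (by rw [Finset.sum_const, Finset.card_range, nsmul_eq_mul, mul_inv_cancel₀ (by positivity)])
      (fun j hj => by
        rw [Finset.mem_range] at hj
        constructor
        · linarith [(hxj j hj).1]
        · linarith [(hxj j hj).2, Real.pi_pos])
    have harg : ∑ j ∈ Finset.range n, (n:ℝ)⁻¹ • ((E (j+1) - E j)/2) = π/(2*n) := by
      rw [← Finset.smul_sum]
      rw [show ∑ j ∈ Finset.range n, (E (j+1) - E j)/2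
        = (∑ j ∈ Finset.range n, (E (j+1) - E j))/2 by rw [← Finset.sum_div]]
      rw [hsum, smul_eq_mul]
      have hne : (n:ℝ) ≠ 0 := by positivity
      field_simp
    rw [harg] at h
    have h2 : ∑ j ∈ Finset.range n, (n:ℝ)⁻¹ • Real.sin ((E (j+1) - E j)/2)
        = (n:ℝ)⁻¹ * ∑ j ∈ Finset.range n, Real.sin ((E (j+1) - E j)/2) := by
      rw [← Finset.smul_sum]; rfl
    rw [h2] at h
    rw [show (n:ℝ) * Real.sin (π/(2*n)) = (n:ℝ) * Real.sin (π/(2*n)) from rfl]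
    calc ∑ j ∈ Finset.range n, Real.sin ((E (j+1) - E j)/2)
        = (n:ℝ) * ((n:ℝ)⁻¹ * ∑ j ∈ Finset.range n, Real.sin ((E (j+1) - E j)/2)) := by
          field_simp
      _ ≤ (n:ℝ) * Real.sin (π/(2*n)) := by
          apply mul_le_mul_of_nonneg_left h (by positivity)
  -- final chain
  have chain : 2 * (n:ℝ) ≤ M * (2 * (n * Real.sin (π/(2*n)))) := by
    calc 2 * (n:ℝ) = ∑ j ∈ Finset.range n, (inner ℝ (S j) (w (E (j+1)) - w (E j)) : ℝ) :=
          key3.symm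
      _ ≤ ∑ j ∈ Finset.range n, M * (2 * Real.sin ((E (j+1) - E j)/2)) := by
          apply Finset.sum_le_sum
          intro j hj
          exact keybound j (Finset.mem_range.1 hj)
      _ = M * (2 * ∑ j ∈ Finset.range n, Real.sin ((E (j+1) - E j)/2)) := by
          rw [← Finset.mul_sum, ← Finset.mul_sum]
      _ ≤ M * (2 * (n * Real.sin (π/(2*n)))) := by
          apply mul_le_mul_of_nonneg_left _ hM0
          apply mul_le_mul_of_nonneg_left jensen (by norm_num)
  rw [div_le_iff₀ hsin]
  nlinarith


lemma reg_full_value {n : ℕ} (hn : 1 ≤ n) :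
    ‖∑ i ∈ (Finset.univ : Finset (Fin n)), (1:ℝ) • regVec 2 n i‖
      = 1 / Real.sin (π/(2*n)) := by
  rw [regVec_sum_norm (le_refl 2)]
  have hs := sin_alpha_pos hn
  have hX : ∑ i ∈ (Finset.univ : Finset (Fin n)), (1:ℝ) * Real.cos (i * (π/n)) = 1 := by
    simp only [one_mul]
    rw [Fin.sum_univ_eq_sum_range (fun i => Real.cos (i * (π/n))) n]
    exact sum_cos_reg hn
  have hY : ∑ i ∈ (Finset.univ : Finset (Fin n)), (1:ℝ) * Real.sin (i * (π/n))
      = Real.cos (π/(2*n)) / Real.sin (π/(2*n)) := by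
    simp only [one_mul]
    rw [Fin.sum_univ_eq_sum_range (fun i => Real.sin (i * (π/n))) n]
    exact sum_sin_reg hn
  rw [hX, hY]
  have hid : (1:ℝ)^2 + (Real.cos (π/(2*n)) / Real.sin (π/(2*n)))^2
      = (1 / Real.sin (π/(2*n)))^2 := by
    field_simp
    exact Real.sin_sq_add_cos_sq _
  rw [hid]
  exact Real.sqrt_sq (by positivity)

lemma isGreatest_reg2 {n : ℕ} (hn : 1 ≤ n) :
    IsGreatest (signedSubsetSumsD 2 n n (regVec 2 n)) (1 / Real.sin (π/(2*n))) := by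
  constructor
  · exact ⟨Finset.univ, fun _ => 1, by simp, fun i => Or.inl rfl, (reg_full_value hn).symm⟩
  · rintro x ⟨s, ε, hcard, hε, rfl⟩
    rw [regVec_sum_norm (le_refl 2)]
    exact planar_bound hn s ε hε

lemma exists_greatest_sss (d n k : ℕ) (hd : 2 ≤ d) (hk : 1 ≤ k) (hkn : k ≤ n) :
    ∃ M, IsGreatest (signedSubsetSumsD d n k (regVec d n)) M
      ∧ M ≤ 1 / Real.sin (π/(2*n)) := by
  have hn : 1 ≤ n := le_trans hk hkn
  have hfin : (signedSubsetSumsD d n k (regVec d n)).Finite := by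
    apply Set.Finite.subset (Set.finite_range (fun p : Finset (Fin n) × (Fin n → Bool) =>
      ‖∑ i ∈ p.1, (if p.2 i then (1:ℝ) else -1) • regVec d n i‖))
    rintro x ⟨s, ε, hcard, hε, rfl⟩
    refine ⟨(s, fun i => ε i = 1), ?_⟩
    simp only
    congr 1
    apply Finset.sum_congr rfl
    intro i _
    congr 1
    by_cases h : ε i = 1
    · simp [h]
    · rcases hε i with h1|h1
      · exact absurd h1 h
      · rw [if_neg (by simp [h])]
        exact h1.symm
  have hne : (signedSubsetSumsD d n k (regVec d n)).Nonempty := by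
    obtain ⟨s, _, hcard⟩ := Finset.exists_subset_card_eq
      (show k ≤ (Finset.univ : Finset (Fin n)).card by
        rw [Finset.card_univ, Fintype.card_fin]; exact hkn)
    exact ⟨_, s, fun _ => 1, hcard, fun _ => Or.inl rfl, rfl⟩
  obtain ⟨a, ha, hmax⟩ := Set.exists_max_image _ id hfin hne
  refine ⟨a, ⟨ha, fun b hb => hmax b hb⟩, ?_⟩
  obtain ⟨s, ε, hcard, hε, rfl⟩ := ha
  rw [regVec_sum_norm hd]
  exact planar_bound hn s ε hε

lemma sss_bdd (d n k : ℕ) : BddBelow {M : ℝ | ∃ u : Fin n → EuclideanSpace ℝ (Fin d),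
    (∀ i, ‖u i‖ = 1) ∧ IsGreatest (signedSubsetSumsD d n k u) M} := by
  refine ⟨0, ?_⟩
  rintro M ⟨u, hu, hgr⟩
  obtain ⟨s, ε, _, _, rfl⟩ := hgr.1
  exact norm_nonneg _

theorem stmt18 (d n k : ℕ) (hd : 2 ≤ d) (hk : 1 ≤ k) (hkn : k ≤ n) :
    cdnk 2 n n = 1 / Real.sin (π / (2 * n)) ∧
    cdnk d n k ≤ cdnk 2 n n ∧
    ∃ u : Fin n → EuclideanSpace ℝ (Fin d), (∀ i, ‖u i‖ = 1) ∧
      ∀ (s : Finset (Fin n)) (ε : Fin n → ℝ), s.card = k → (∀ i, ε i = 1 ∨ ε i = -1) →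
        ‖∑ i ∈ s, ε i • u i‖ ≤ 1 / Real.sin (π / (2 * n)) := by
  have hn : 1 ≤ n := le_trans hk hkn
  have hmem2 : (1 / Real.sin (π/(2*n))) ∈ {M : ℝ | ∃ u : Fin n → EuclideanSpace ℝ (Fin 2),
      (∀ i, ‖u i‖ = 1) ∧ IsGreatest (signedSubsetSumsD 2 n n u) M} :=
    ⟨regVec 2 n, regVec_norm (le_refl 2), isGreatest_reg2 hn⟩
  have h1 : cdnk 2 n n = 1 / Real.sin (π/(2*n)) := by
    apply le_antisymm
    · exact csInf_le (sss_bdd 2 n n) hmem2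
    · apply le_csInf ⟨_, hmem2⟩
      rintro M ⟨u, hu, hgr⟩
      apply lower_bound hn u hu M
      intro ε hε
      apply hgr.2
      exact ⟨Finset.univ, ε, by simp, hε, rfl⟩
  obtain ⟨Md, hMgr, hMle⟩ := exists_greatest_sss d n k hd hk hkn
  have h2 : cdnk d n k ≤ 1 / Real.sin (π/(2*n)) := by
    apply le_trans (csInf_le (sss_bdd d n k) ⟨regVec d n, regVec_norm hd, hMgr⟩) hMle
  refine ⟨h1, by rw [h1]; exact h2, ?_⟩
  refine ⟨regVec d n, regVec_norm hd, fun s ε hcard hε => ?_⟩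
  rw [regVec_sum_norm hd]
  exact planar_bound hn s ε hε
end
end
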